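/- arXiv:1502.02770 — 7 statements merged into one kernel-verified Lean document; each statement's English description precedes it below -/
import Mathlib

section
/- Let V be a Gel'fand–Dorfman bialgebra over ℂ, let n > 3 be a natural number, and let α_0,…,α_n : V×V → ℂ be bilinear forms forming a central-extension cocycle, i.e. satisfying condition (S) and condition (C). Then α_n(a∘b, c) = 0 for all a, b, c ∈ V. -/
/-- The polynomial `α_λ(a,b) = Σ_{i=0}^n λ^i α_i(a,b)` evaluated at `l : ℂ`. -/
noncomputable def alphaPoly {V : Type*} [AddCommGroup V] [Module ℂ V]
    (n : ℕ) (α : ℕ → V →ₗ[ℂ] V →ₗ[ℂ] ℂ) (l : ℂ) (a b : V) : ℂ :=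
  ∑ i ∈ Finset.range (n + 1), l ^ i * α i a b

lemma natlem (n : ℕ) (hn : 3 < n) :
    (n+1).choose 2 * n.choose 3 ≠ (n+1).choose 3 * n.choose 2 := by
  have h1 : n.choose 3 * 3 = n.choose 2 * (n-2) := Nat.choose_succ_right_eq n 2
  have h2 : (n+1).choose 3 * 3 = (n+1).choose 2 * (n-1) := by
    have := Nat.choose_succ_right_eq (n+1) 2
    simpa [show n+1-2 = n-1 by omega] using this
  intro h
  have e : (n+1).choose 2 * (n.choose 2 * (n-2)) = (n+1).choose 2 * (n.choose 2 * (n-1)) := by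
    calc (n+1).choose 2 * (n.choose 2 * (n-2)) = (n+1).choose 2 * (n.choose 3 * 3) := by rw [h1]
    _ = (n+1).choose 2 * n.choose 3 * 3 := by ring
    _ = (n+1).choose 3 * n.choose 2 * 3 := by rw [h]
    _ = ((n+1).choose 3 * 3) * n.choose 2 := by ring
    _ = (n+1).choose 2 * (n-1) * n.choose 2 := by rw [h2]
    _ = (n+1).choose 2 * (n.choose 2 * (n-1)) := by ring
  have hp1 : 0 < (n+1).choose 2 := Nat.choose_pos (by omega)
  have hp2 : 0 < n.choose 2 := Nat.choose_pos (by omega)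
  have := Nat.eq_of_mul_eq_mul_left hp2 (Nat.eq_of_mul_eq_mul_left hp1 e)
  omega

open Polynomial in
lemma stage2 (n j : ℕ) (u0 u1 u2 u3 A B : ℂ)
    (h : ∀ t : ℂ, u0 + u1 * t - u2 * t^(n+1) - u3 * t^n + A * (1+t)^(n+1) - B * (1+t)^n = 0)
    (hj0 : j ≠ 0) (hj1 : j ≠ 1) (hjn : j ≠ n) (hjn1 : j ≠ n+1) :
    ((n+1).choose j : ℂ) * A - (n.choose j : ℂ) * B = 0 := by
  set Q : Polynomial ℂ := C u0 + C u1 * X - C u2 * X^(n+1) - C u3 * X^n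
      + C A * (X+1)^(n+1) - C B * (X+1)^n with hQdef
  have hQ : Q = 0 := by
    apply Polynomial.funext
    intro t
    simp only [hQdef, eval_add, eval_sub, eval_mul, eval_pow, eval_C, eval_X, eval_one, eval_zero]
    linear_combination h t
  have hc := congrArg (fun p => Polynomial.coeff p j) hQ
  simp only [hQdef, coeff_add, coeff_sub, coeff_C_mul, coeff_X_pow, coeff_C,
    Polynomial.coeff_X_add_one_pow, Polynomial.coeff_zero, Polynomial.coeff_X,
    if_neg hj0, if_neg hjn, if_neg hjn1, if_neg (Ne.symm hj1)] at hc
  linear_combination hc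

open Polynomial Finset in
lemma stage1 {V : Type*} [AddCommGroup V] [Module ℂ V]
    (circ br : V →ₗ[ℂ] V →ₗ[ℂ] V) (n : ℕ) (α : ℕ → V →ₗ[ℂ] V →ₗ[ℂ] ℂ)
    (hC : ∀ (a b c : V) (l m : ℂ),
      l * alphaPoly n α l a (circ c b)
        + m * alphaPoly n α l a (circ b c + circ c b)
        + alphaPoly n α l a (br c b)
        - m * alphaPoly n α m b (circ c a)
        - l * alphaPoly n α m b (circ a c + circ c a)
        - alphaPoly n α m b (br c a)
      = (-l - m) * alphaPoly n α (l + m) (circ b a) c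
        + l * alphaPoly n α (l + m) (circ a b + circ b a) c
        + alphaPoly n α (l + m) (br b a) c)
    (a b c : V) (t : ℂ) :
    α n a (circ c b) + t * α n a (circ b c + circ c b)
      - t^(n+1) * α n b (circ c a) - t^n * α n b (circ a c + circ c a)
      + (1+t)^(n+1) * α n (circ b a) c - (1+t)^n * α n (circ a b + circ b a) c = 0 := by
  set P : Polynomial ℂ :=
      (∑ i ∈ range (n+1), C (α i a (circ c b)) * X^(i+1))
    + (∑ i ∈ range (n+1), C (t * α i a (circ b c + circ c b)) * X^(i+1))
    + (∑ i ∈ range (n+1), C (α i a (br c b)) * X^i)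
    - (∑ i ∈ range (n+1), C (t^(i+1) * α i b (circ c a)) * X^(i+1))
    - (∑ i ∈ range (n+1), C (t^i * α i b (circ a c + circ c a)) * X^(i+1))
    - (∑ i ∈ range (n+1), C (t^i * α i b (br c a)) * X^i)
    + (∑ i ∈ range (n+1), C ((1+t)^(i+1) * α i (circ b a) c) * X^(i+1))
    - (∑ i ∈ range (n+1), C ((1+t)^i * α i (circ a b + circ b a) c) * X^(i+1))
    - (∑ i ∈ range (n+1), C ((1+t)^i * α i (br b a) c) * X^i) with hPdef
  have hP : P = 0 := by
    apply Polynomial.funext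
    intro l
    have key := hC a b c l (t*l)
    simp only [alphaPoly] at key
    simp only [hPdef, eval_add, eval_sub, eval_finset_sum, eval_mul, eval_pow, eval_C, eval_X,
      eval_zero, Finset.mul_sum] at key ⊢
    have e1 : ∀ (x y : V), ∑ i ∈ range (n+1), t^(i+1) * α i x y * l^(i+1)
        = ∑ i ∈ range (n+1), t*l * ((t*l)^i * α i x y) :=
      fun x y => Finset.sum_congr rfl (fun i _ => by ring)
    have e2 : ∀ (x y : V), ∑ i ∈ range (n+1), t^i * α i x y * l^(i+1)
        = ∑ i ∈ range (n+1), l * ((t*l)^i * α i x y) :=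
      fun x y => Finset.sum_congr rfl (fun i _ => by ring)
    have e3 : ∀ (x y : V), ∑ i ∈ range (n+1), t^i * α i x y * l^i
        = ∑ i ∈ range (n+1), (t*l)^i * α i x y :=
      fun x y => Finset.sum_congr rfl (fun i _ => by ring)
    have e4 : ∀ (x y : V), ∑ i ∈ range (n+1), (1+t)^(i+1) * α i x y * l^(i+1)
        = ∑ i ∈ range (n+1), -((-l - t*l) * ((l + t*l)^i * α i x y)) :=
      fun x y => Finset.sum_congr rfl (fun i _ => by
        rw [show l + t*l = (1+t)*l by ring, mul_pow]; ring)
    have e5 : ∀ (x y : V), ∑ i ∈ range (n+1), (1+t)^i * α i x y * l^(i+1)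
        = ∑ i ∈ range (n+1), l * ((l + t*l)^i * α i x y) :=
      fun x y => Finset.sum_congr rfl (fun i _ => by
        rw [show l + t*l = (1+t)*l by ring, mul_pow]; ring)
    have e6 : ∀ (x y : V), ∑ i ∈ range (n+1), (1+t)^i * α i x y * l^i
        = ∑ i ∈ range (n+1), (l + t*l)^i * α i x y :=
      fun x y => Finset.sum_congr rfl (fun i _ => by
        rw [show l + t*l = (1+t)*l by ring, mul_pow]; ring)
    have e7 : ∀ (x y : V), ∑ i ∈ range (n+1), α i x y * l^(i+1)
        = ∑ i ∈ range (n+1), l * (l^i * α i x y) :=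
      fun x y => Finset.sum_congr rfl (fun i _ => by ring)
    have e8 : ∀ (x y : V), ∑ i ∈ range (n+1), t * α i x y * l^(i+1)
        = ∑ i ∈ range (n+1), t*l * (l^i * α i x y) :=
      fun x y => Finset.sum_congr rfl (fun i _ => by ring)
    have e9 : ∀ (x y : V), ∑ i ∈ range (n+1), α i x y * l^i
        = ∑ i ∈ range (n+1), l^i * α i x y :=
      fun x y => Finset.sum_congr rfl (fun i _ => by ring)
    rw [e7, e8, e9, e1, e2, e3, e4, e5, e6]
    simp only [Finset.sum_neg_distrib]
    linear_combination key
  have hcoeff := congrArg (fun p => Polynomial.coeff p (n+1)) hP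
  simp only [hPdef, coeff_add, coeff_sub, finset_sum_coeff, coeff_C_mul, coeff_X_pow,
    coeff_zero] at hcoeff
  have g1 : ∀ (u : ℕ → ℂ), ∑ i ∈ range (n+1), u i * (if n+1 = i+1 then (1:ℂ) else 0) = u n := by
    intro u
    rw [Finset.sum_eq_single n]
    · simp
    · intro i hi hne
      rw [if_neg (by omega), mul_zero]
    · intro h; exact absurd (self_mem_range_succ n) h
  have g2 : ∀ (u : ℕ → ℂ), ∑ i ∈ range (n+1), u i * (if n+1 = i then (1:ℂ) else 0) = 0 := by
    intro u
    apply Finset.sum_eq_zero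
    intro i hi
    rw [if_neg (by simp at hi; omega), mul_zero]
  rw [g1, g1, g2, g1, g1, g2, g1, g1, g2] at hcoeff
  linear_combination hcoeff

/-- Let `(V, ∘, [·,·])` be a Gel'fand–Dorfman bialgebra over `ℂ`,
`n > 3`, and `α_0, …, α_n` bilinear forms forming a central-extension cocycle,
i.e. satisfying condition (S) and condition (C).  Then `α_n(a∘b, c) = 0` for all
`a, b, c ∈ V`. -/
theorem stmt_0 {V : Type*} [AddCommGroup V] [Module ℂ V]
    (circ br : V →ₗ[ℂ] V →ₗ[ℂ] V)
    -- Novikov algebra axioms for `∘ = circ`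
    (hNov1 : ∀ a b c : V, circ (circ a b) c - circ a (circ b c)
      = circ (circ b a) c - circ b (circ a c))
    (hNov2 : ∀ a b c : V, circ (circ a b) c = circ (circ a c) b)
    -- Lie algebra axioms for `[·,·] = br`
    (hSkew : ∀ a b : V, br a b = - br b a)
    (hJacobi : ∀ a b c : V, br (br a b) c + br (br b c) a + br (br c a) b = 0)
    -- compatibility condition of the Gel'fand–Dorfman bialgebra
    (hCompat : ∀ a b c : V, br (circ a b) c - br (circ a c) b + circ (br a b) c
      - circ (br a c) b - circ a (br b c) = 0)
    (n : ℕ) (hn : 3 < n)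
    (α : ℕ → V →ₗ[ℂ] V →ₗ[ℂ] ℂ)
    -- condition (S): `α_λ(a,b) = −α_{−λ}(b,a)`
    (hS : ∀ (a b : V) (l : ℂ), alphaPoly n α l a b = - alphaPoly n α (-l) b a)
    -- condition (C)
    (hC : ∀ (a b c : V) (l m : ℂ),
      l * alphaPoly n α l a (circ c b)
        + m * alphaPoly n α l a (circ b c + circ c b)
        + alphaPoly n α l a (br c b)
        - m * alphaPoly n α m b (circ c a)
        - l * alphaPoly n α m b (circ a c + circ c a)
        - alphaPoly n α m b (br c a)
      = (-l - m) * alphaPoly n α (l + m) (circ b a) c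
        + l * alphaPoly n α (l + m) (circ a b + circ b a) c
        + alphaPoly n α (l + m) (br b a) c) :
    ∀ a b c : V, α n (circ a b) c = 0 := by
  intro a b c
  have h : ∀ t : ℂ, (α n b (circ c a)) + (α n b (circ a c + circ c a)) * t
      - (α n a (circ c b)) * t^(n+1) - (α n a (circ b c + circ c b)) * t^n
      + (α n (circ a b) c) * (1+t)^(n+1) - (α n (circ b a + circ a b) c) * (1+t)^n = 0 :=
    fun t => by linear_combination stage1 circ br n α hC b a c t
  have h2 := stage2 n 2 _ _ _ _ _ _ h (by omega) (by omega) (by omega) (by omega)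
  have h3 := stage2 n 3 _ _ _ _ _ _ h (by omega) (by omega) (by omega) (by omega)
  have key : ((((n+1).choose 2 * n.choose 3 : ℕ)) : ℂ) * (α n (circ a b) c)
      = (((n+1).choose 3 * n.choose 2 : ℕ) : ℂ) * (α n (circ a b) c) := by
    push_cast
    linear_combination (n.choose 3 : ℂ) * h2 - (n.choose 2 : ℂ) * h3
  have hne : ((((n+1).choose 2 * n.choose 3 : ℕ)) : ℂ)
      ≠ (((n+1).choose 3 * n.choose 2 : ℕ) : ℂ) := by
    exact_mod_cast natlem n hn
  by_contra hA
  exact hne (mul_right_cancel₀ hA key)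
end

section
/- Let V be a finite-dimensional Gel'fand–Dorfman bialgebra over ℂ such that every element of V is a finite sum of products y∘z with y, z ∈ V (i.e. V is spanned by {y∘z : y,z ∈ V}). Let α : V×V → ℂ[λ] be a bilinear map into polynomials in λ satisfying, for all a,b,c ∈ V and λ,μ ∈ ℂ: (S) α(a,b)(λ) = −α(b,a)(−λ), and (C) λ α(a, c∘b)(λ) + μ α(a, b∗c)(λ) + α(a,[c,b])(λ) − μ α(b, c∘a)(μ) − λ α(b, a∗c)(μ) − α(b,[c,a])(μ) = (−λ−μ) α(b∘a, c)(λ+μ) + λ α(a∗b, c)(λ+μ) + α([b,a], c)(λ+μ). Then there exist bilinear forms α_0, α_1, α_2, α_3 : V×V → ℂ with α(a,b)(λ) = Σ_{i=0}^3 λ^i α_i(a,b) for all a,b ∈ V and λ ∈ ℂ (in particular every α(a,b) has degree at most 3 in λ), and the identities (I1)–(I8) hold for all a, b, c ∈ V. -/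
/-!
Write (C) as `f₀(λ) + μ f₁(λ) + g₀(μ) + λ g₁(μ) = F(λ + μ) + λ Q(λ + μ)` with
`F = -X α(b∘a, c) + α([b,a], c)` and `Q = α(a∗b, c)`. The left side has no monomial `λⁱμʲ` with
`i, j ≥ 2`, whereas on the right its coefficient is `C(i+j, i) F_{i+j} + C(i+j-1, i-1) Q_{i+j-1}`.
Two such equations with `i + j = k + 5` force `F_{k+5} = 0`, that is
`α_{k+4}(b∘a, c) = α_{k+5}([b,a], c)`. The degrees of `α` are bounded because `V` is
finite-dimensional, and `V` is additively spanned by the products `b∘a`, so a downward induction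
gives `α_k = 0` for `k ≥ 4`. Each of (I2)–(I8) is then the comparison of a single coefficient of (C)
(of `λ⁴` and `λ²μ²`, `λ³`, `λ²μ`, `λ²`, `λμ`, `λ`, `1`), and (I1) is (S) read coefficientwise.
-/

open Polynomial

namespace Polynomial

theorem eval_eq_of_natDegree_le_three {R : Type*} [CommSemiring R] {p : R[X]}
    (hp : p.natDegree ≤ 3) (x : R) :
    p.eval x = p.coeff 0 + x * p.coeff 1 + x ^ 2 * p.coeff 2 + x ^ 3 * p.coeff 3 := by
  rw [eval_eq_sum_range' (Nat.lt_succ_of_le hp)]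
  simp only [Finset.sum_range_succ, Finset.sum_range_zero]
  ring

variable {R : Type*} [CommRing R] [IsDomain R] [Infinite R]

theorem coeff_eq_neg_one_pow_mul_of_forall_eval {p q : R[X]} (h : ∀ l, p.eval l = -q.eval (-l))
    (k : ℕ) : p.coeff k = -((-1) ^ k * q.coeff k) := by
  have hpq : p = -q.comp (C (-1) * X) :=
    Polynomial.funext fun l => by simpa using h l
  rw [hpq, coeff_neg, comp_C_mul_X_coeff, mul_comm]

variable {f₀ f₁ g₀ g₁ F Q : R[X]}

theorem eq_taylor_of_forall_eval_add
    (h : ∀ l m : R, f₀.eval l + m * f₁.eval l + g₀.eval m + l * g₁.eval m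
      = F.eval (l + m) + l * Q.eval (l + m)) (m : R) :
    f₀ + C m * f₁ + C (g₀.eval m) + C (g₁.eval m) * X = taylor m F + X * taylor m Q := by
  refine Polynomial.funext fun l => ?_
  simp only [eval_add, eval_mul, eval_C, eval_X, taylor_eval]
  linear_combination h l m

theorem add_eq_hasseDeriv_one_add_of_forall_eval_add
    (h : ∀ l m : R, f₀.eval l + m * f₁.eval l + g₀.eval m + l * g₁.eval m
      = F.eval (l + m) + l * Q.eval (l + m)) :
    C (f₀.coeff 1) + C (f₁.coeff 1) * X + g₁ = hasseDeriv 1 F + Q := by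
  refine Polynomial.funext fun m => ?_
  have h₁ := congrArg (coeff · 1) (eq_taylor_of_forall_eval_add h m)
  simp only [coeff_add, coeff_C_mul, coeff_C_succ, add_zero, coeff_mul_X, coeff_C_zero,
    taylor_coeff, coeff_X_mul, hasseDeriv_zero, LinearMap.id_coe, id_eq] at h₁
  simp only [eval_add, eval_mul, eval_C, eval_X]
  linear_combination h₁

theorem eq_hasseDeriv_add_of_forall_eval_add
    (h : ∀ l m : R, f₀.eval l + m * f₁.eval l + g₀.eval m + l * g₁.eval m
      = F.eval (l + m) + l * Q.eval (l + m)) (i : ℕ) :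
    C (f₀.coeff (i + 2)) + C (f₁.coeff (i + 2)) * X
      = hasseDeriv (i + 2) F + hasseDeriv (i + 1) Q := by
  refine Polynomial.funext fun m => ?_
  have h₁ := congrArg (coeff · (i + 2)) (eq_taylor_of_forall_eval_add h m)
  simp only [coeff_add, coeff_C_mul, coeff_C_succ, add_zero, coeff_mul_X, taylor_coeff,
    coeff_X_mul] at h₁
  simp only [eval_add, eval_mul, eval_C, eval_X]
  linear_combination h₁

theorem coeff_add_five_eq_zero_of_forall_eval_add [CharZero R]
    (h : ∀ l m : R, f₀.eval l + m * f₁.eval l + g₀.eval m + l * g₁.eval m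
      = F.eval (l + m) + l * Q.eval (l + m)) (k : ℕ) :
    F.coeff (k + 5) = 0 := by
  -- the coefficients of `λ²μ^{k+3}` and `λ^{k+3}μ²`
  have e₁ := congrArg (coeff · (k + 3)) (eq_hasseDeriv_add_of_forall_eval_add h 0)
  have e₂ := congrArg (coeff · 2) (eq_hasseDeriv_add_of_forall_eval_add h (k + 1))
  simp only [coeff_add, coeff_C_succ, coeff_mul_X, hasseDeriv_coeff, zero_add, add_zero] at e₁ e₂
  rw [show k + 3 + 2 = k + 5 by omega, show k + 3 + 1 = k + 4 by omega] at e₁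
  rw [show 2 + (k + 1 + 2) = k + 5 by omega, show 2 + (k + 1 + 1) = k + 4 by omega,
    show k + 1 + 2 = k + 5 - 2 by omega, show k + 1 + 1 = k + 4 - 2 by omega,
    Nat.choose_symm (by omega), Nat.choose_symm (by omega)] at e₂
  have hchoose : ((k + 4).choose 2 : R) - (k + 4).choose 1 ≠ 0 := by
    have h₃ : 3 ≤ (k + 3).choose 2 := Nat.choose_le_choose 2 (Nat.le_add_left 3 k)
    have h₄ : (k + 4).choose 2 = k + 3 + (k + 3).choose 2 := by
      rw [Nat.choose_succ_succ', Nat.choose_one_right]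
    rw [sub_ne_zero, Ne, Nat.cast_inj, Nat.choose_one_right, h₄]
    omega
  have hQ : Q.coeff (k + 4) = 0 := by
    refine (mul_eq_zero.mp ?_).resolve_left hchoose
    linear_combination e₁ - e₂
  rw [hQ, mul_zero, add_zero, eq_comm, mul_eq_zero] at e₁
  exact e₁.resolve_left (Nat.cast_ne_zero.mpr (Nat.choose_pos (by omega)).ne')

end Polynomial

theorem LinearMap.exists_natDegree_le {R M N : Type*} [CommRing R] [AddCommGroup M] [Module R M]
    [Module.Finite R M] [AddCommGroup N] [Module R N] [Module.Finite R N]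
    (α : M →ₗ[R] N →ₗ[R] R[X]) : ∃ d, ∀ a b, (α a b).natDegree ≤ d := by
  obtain ⟨s, hs⟩ := Module.Finite.fg_top (R := R) (M := M)
  obtain ⟨t, ht⟩ := Module.Finite.fg_top (R := R) (M := N)
  refine ⟨(s ×ˢ t).sup fun p => (α p.1 p.2).natDegree, fun a b => ?_⟩
  have hmem : α a b ∈ Submodule.map₂ α (Submodule.span R s) (Submodule.span R t) :=
    Submodule.apply_mem_map₂ α (hs ▸ Submodule.mem_top) (ht ▸ Submodule.mem_top)
  rw [Submodule.map₂_span_span] at hmem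
  refine natDegree_le_iff_degree_le.mpr (mem_degreeLE.mp (Submodule.span_le.mpr ?_ hmem))
  rintro _ ⟨x, hx, y, hy, rfl⟩
  rw [SetLike.mem_coe, mem_degreeLE, ← natDegree_le_iff_degree_le]
  exact Finset.le_sup (f := fun p : M × N => (α p.1 p.2).natDegree) (Finset.mk_mem_product hx hy)

section

variable {K V : Type*} [Field K] [AddCommGroup V] [Module K V]

def ConditionC (circ br : V →ₗ[K] V →ₗ[K] V) (α : V →ₗ[K] V →ₗ[K] K[X]) : Prop :=
  ∀ (a b c : V) (l m : K),
    l * (α a (circ c b)).eval l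
      + m * (α a (circ b c + circ c b)).eval l
      + (α a (br c b)).eval l
      - m * (α b (circ c a)).eval m
      - l * (α b (circ a c + circ c a)).eval m
      - (α b (br c a)).eval m
    = (-l - m) * (α (circ b a) c).eval (l + m)
      + l * (α (circ a b + circ b a) c).eval (l + m)
      + (α (br b a) c).eval (l + m)

variable {circ br : V →ₗ[K] V →ₗ[K] V} {α : V →ₗ[K] V →ₗ[K] K[X]}

namespace ConditionC

theorem forall_eval_add (hC : ConditionC circ br α) (a b c : V) (l m : K) :
    (X * α a (circ c b) + α a (br c b)).eval l + m * (α a (circ b c + circ c b)).eval l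
      + (-(X * α b (circ c a) + α b (br c a))).eval m + l * (-α b (circ a c + circ c a)).eval m
    = (-(X * α (circ b a) c) + α (br b a) c).eval (l + m)
      + l * (α (circ a b + circ b a) c).eval (l + m) := by
  simp only [eval_add, eval_neg, eval_mul, eval_X]
  linear_combination hC a b c l m

theorem identity_I8 (hC : ConditionC circ br α) (a b c : V) :
    (α a (br c b)).coeff 0 - (α b (br c a)).coeff 0 = (α (br b a) c).coeff 0 := by
  simpa [coeff_zero_eq_eval_zero] using hC a b c 0 0

variable [CharZero K]

theorem coeff_circ_add_four (hC : ConditionC circ br α) (a b c : V) (k : ℕ) :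
    (α (circ b a) c).coeff (k + 4) = (α (br b a) c).coeff (k + 5) := by
  have h := coeff_add_five_eq_zero_of_forall_eval_add (hC.forall_eval_add a b c) k
  rw [coeff_add, coeff_neg, coeff_X_mul] at h
  linear_combination -h

theorem natDegree_le_three [FiniteDimensional K V] (hC : ConditionC circ br α)
    (hspan : AddSubmonoid.closure {x : V | ∃ u v : V, circ u v = x} = ⊤) (a b : V) :
    (α a b).natDegree ≤ 3 := by
  obtain ⟨d, hd⟩ := α.exists_natDegree_le
  have descend : ∀ k, (∀ w c, (α w c).coeff (k + 5) = 0) → ∀ w c, (α w c).coeff (k + 4) = 0 := by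
    intro k hk w c
    have hle : AddSubmonoid.closure {x : V | ∃ u v : V, circ u v = x}
        ≤ AddMonoidHom.mker ((lcoeff K (k + 4)).comp (α.flip c)).toAddMonoidHom :=
      AddSubmonoid.closure_le.mpr <| by
        rintro _ ⟨u, v, rfl⟩
        simpa [hk] using hC.coeff_circ_add_four v u c k
    exact hle (hspan ▸ AddSubmonoid.mem_top w)
  have hvanish : ∀ n k, d < k + n → ∀ w c, (α w c).coeff (k + 4) = 0 := by
    intro n
    induction n with
    | zero => exact fun k hk w c => coeff_eq_zero_of_natDegree_lt (by have := hd w c; omega)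
    | succ n ih => exact fun k hk => descend k (ih (k + 1) (by omega))
  refine natDegree_le_iff_coeff_eq_zero.mpr fun N hN => ?_
  obtain ⟨k, rfl⟩ := Nat.exists_eq_add_of_le' (show 4 ≤ N by exact_mod_cast hN)
  exact hvanish (d + 1) k (by omega) a b

theorem identity_I2 (hC : ConditionC circ br α) (hdeg : ∀ x y, (α x y).natDegree ≤ 3)
    (a b c : V) :
    (α a (circ c b)).coeff 3 = (α (circ a b) c).coeff 3
      ∧ (α (circ a b) c).coeff 3 = (α (circ b a) c).coeff 3 := by
  have h := hC.forall_eval_add a b c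
  have h₄₀ := congrArg (coeff · 0) (eq_hasseDeriv_add_of_forall_eval_add h 2)
  have h₂₂ := congrArg (coeff · 2) (eq_hasseDeriv_add_of_forall_eval_add h 0)
  have hcoeff_four : ∀ x y, (α x y).coeff 4 = 0 :=
    fun x y => coeff_eq_zero_of_natDegree_lt ((hdeg x y).trans_lt (by norm_num))
  simp only [Nat.reduceAdd, coeff_add, coeff_X_mul, hcoeff_four, map_add, coeff_C_zero,
    coeff_mul_X_zero, map_neg, LinearMap.add_apply, coeff_neg, hasseDeriv_coeff, Nat.choose,
    Nat.cast_one, coeff_C_succ, coeff_mul_X, Nat.cast_ofNat] at h₄₀ h₂₂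
  exact ⟨by linear_combination h₄₀, by linear_combination -h₂₂ / 3⟩

theorem identity_I3 (hC : ConditionC circ br α) (a b c : V) :
    (α a (circ c b)).coeff 2 + (α a (br c b)).coeff 3
      = (α (circ a b) c).coeff 2 + (α (br b a) c).coeff 3 := by
  have h := congrArg (coeff · 0)
    (eq_hasseDeriv_add_of_forall_eval_add (hC.forall_eval_add a b c) 1)
  simp only [Nat.reduceAdd, coeff_add, coeff_X_mul, map_add, coeff_C_zero, coeff_mul_X_zero,
    map_neg, LinearMap.add_apply, coeff_neg, hasseDeriv_coeff, Nat.choose, Nat.cast_one] at h ⊢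
  linear_combination h

theorem identity_I4 (hC : ConditionC circ br α) (a b c : V) :
    (α a (circ b c + circ c b)).coeff 2 + (α (circ b a) c).coeff 2
      = 2 * (α (circ a b) c).coeff 2 + 3 * (α (br b a) c).coeff 3 := by
  have h := congrArg (coeff · 1)
    (eq_hasseDeriv_add_of_forall_eval_add (hC.forall_eval_add a b c) 0)
  simp only [Nat.reduceAdd, coeff_add, coeff_X_mul, map_add, coeff_C_succ, coeff_mul_X,
    coeff_C_zero, map_neg, LinearMap.add_apply, coeff_neg, hasseDeriv_coeff, Nat.choose,
    Nat.cast_ofNat] at h ⊢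
  linear_combination h

theorem identity_I5 (hC : ConditionC circ br α) (a b c : V) :
    (α a (circ c b)).coeff 1 + (α a (br c b)).coeff 2
      = (α (circ a b) c).coeff 1 + (α (br b a) c).coeff 2 := by
  have h := congrArg (coeff · 0)
    (eq_hasseDeriv_add_of_forall_eval_add (hC.forall_eval_add a b c) 0)
  simp only [Nat.reduceAdd, coeff_add, coeff_X_mul, map_add, coeff_C_zero, coeff_mul_X_zero,
    map_neg, LinearMap.add_apply, coeff_neg, hasseDeriv_coeff, Nat.choose, Nat.cast_one] at h ⊢
  linear_combination h

theorem identity_I6 (hC : ConditionC circ br α) (a b c : V) :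
    (α a (circ b c + circ c b)).coeff 1 - (α b (circ a c + circ c a)).coeff 1
      = -(α (circ b a) c).coeff 1 + (α (circ a b) c).coeff 1 + 2 * (α (br b a) c).coeff 2 := by
  have h := congrArg (coeff · 1)
    (add_eq_hasseDeriv_one_add_of_forall_eval_add (hC.forall_eval_add a b c))
  simp only [coeff_add, coeff_X_mul, map_add, coeff_C_succ, coeff_mul_X, coeff_C_zero, coeff_neg,
    map_neg, LinearMap.add_apply, hasseDeriv_coeff, Nat.choose, Nat.reduceAdd,
    Nat.cast_ofNat] at h ⊢
  linear_combination h

theorem identity_I7 (hC : ConditionC circ br α) (a b c : V) :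
    (α a (circ c b)).coeff 0 + (α a (br c b)).coeff 1 - (α b (circ a c + circ c a)).coeff 0
      = (α (circ a b) c).coeff 0 + (α (br b a) c).coeff 1 := by
  have h := congrArg (coeff · 0)
    (add_eq_hasseDeriv_one_add_of_forall_eval_add (hC.forall_eval_add a b c))
  simp only [coeff_add, coeff_X_mul, map_add, coeff_C_zero, coeff_mul_X_zero, coeff_neg, map_neg,
    LinearMap.add_apply, hasseDeriv_coeff, Nat.choose, Nat.reduceAdd, Nat.cast_one] at h ⊢
  linear_combination h

end ConditionC

end

theorem stmt_2_general {V : Type*} [AddCommGroup V] [Module ℂ V] [FiniteDimensional ℂ V]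
    (circ br : V →ₗ[ℂ] V →ₗ[ℂ] V)
    -- every element of `V` is a finite sum of products `y ∘ z`
    (hspan : AddSubmonoid.closure {x : V | ∃ u v : V, circ u v = x} = ⊤)
    (α : V →ₗ[ℂ] V →ₗ[ℂ] Polynomial ℂ)
    -- condition (S)
    (hS : ∀ (a b : V) (l : ℂ), (α a b).eval l = - (α b a).eval (-l))
    -- condition (C)
    (hC : ∀ (a b c : V) (l m : ℂ),
      l * (α a (circ c b)).eval l
        + m * (α a (circ b c + circ c b)).eval l
        + (α a (br c b)).eval l
        - m * (α b (circ c a)).eval m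
        - l * (α b (circ a c + circ c a)).eval m
        - (α b (br c a)).eval m
      = (-l - m) * (α (circ b a) c).eval (l + m)
        + l * (α (circ a b + circ b a) c).eval (l + m)
        + (α (br b a) c).eval (l + m)) :
    ∃ α0 α1 α2 α3 : V →ₗ[ℂ] V →ₗ[ℂ] ℂ,
      (∀ (a b : V) (l : ℂ),
        (α a b).eval l = α0 a b + l * α1 a b + l ^ 2 * α2 a b + l ^ 3 * α3 a b)
      -- (I1): `α_i(a,b) = (−1)^{i+1} α_i(b,a)` for `i = 0, 1, 2, 3`
      ∧ (∀ a b : V, α0 a b = - α0 b a)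
      ∧ (∀ a b : V, α1 a b = α1 b a)
      ∧ (∀ a b : V, α2 a b = - α2 b a)
      ∧ (∀ a b : V, α3 a b = α3 b a)
      -- (I2)
      ∧ (∀ a b c : V, α3 a (circ c b) = α3 (circ a b) c ∧ α3 (circ a b) c = α3 (circ b a) c)
      -- (I3)
      ∧ (∀ a b c : V, α2 a (circ c b) + α3 a (br c b) = α2 (circ a b) c + α3 (br b a) c)
      -- (I4)
      ∧ (∀ a b c : V, α2 a (circ b c + circ c b) + α2 (circ b a) c
          = 2 * α2 (circ a b) c + 3 * α3 (br b a) c)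
      -- (I5)
      ∧ (∀ a b c : V, α1 a (circ c b) + α2 a (br c b) = α1 (circ a b) c + α2 (br b a) c)
      -- (I6)
      ∧ (∀ a b c : V, α1 a (circ b c + circ c b) - α1 b (circ a c + circ c a)
          = - α1 (circ b a) c + α1 (circ a b) c + 2 * α2 (br b a) c)
      -- (I7)
      ∧ (∀ a b c : V, α0 a (circ c b) + α1 a (br c b) - α0 b (circ a c + circ c a)
          = α0 (circ a b) c + α1 (br b a) c)
      -- (I8)
      ∧ (∀ a b c : V, α0 a (br c b) - α0 b (br c a) = α0 (br b a) c) := by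
  have hC : ConditionC circ br α := hC
  have hdeg := hC.natDegree_le_three hspan
  have hsymm (k : ℕ) (a b : V) := coeff_eq_neg_one_pow_mul_of_forall_eval (hS a b) k
  refine ⟨α.compr₂ (lcoeff ℂ 0), α.compr₂ (lcoeff ℂ 1), α.compr₂ (lcoeff ℂ 2),
    α.compr₂ (lcoeff ℂ 3), fun a b l => eval_eq_of_natDegree_le_three (hdeg a b) l,
    fun a b => by simpa using hsymm 0 a b, fun a b => by simpa using hsymm 1 a b,
    fun a b => by simpa using hsymm 2 a b, fun a b => by simpa [pow_succ] using hsymm 3 a b,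
    hC.identity_I2 hdeg, hC.identity_I3, hC.identity_I4, hC.identity_I5, hC.identity_I6,
    hC.identity_I7, hC.identity_I8⟩

/-- Let `V` be a finite-dimensional Gel'fand–Dorfman bialgebra over `ℂ`
in which every element is a finite sum of products `y∘z`.  Let `α : V×V → ℂ[λ]` be a
bilinear map into polynomials satisfying (S) and (C).  Then there are bilinear forms
`α_0, α_1, α_2, α_3 : V×V → ℂ` with `α(a,b)(λ) = Σ_{i=0}^3 λ^i α_i(a,b)`, and the
identities (I1)–(I8) hold. -/
theorem stmt_2 {V : Type*} [AddCommGroup V] [Module ℂ V] [FiniteDimensional ℂ V]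
    (circ br : V →ₗ[ℂ] V →ₗ[ℂ] V)
    -- Novikov algebra axioms for `∘ = circ`
    (hNov1 : ∀ a b c : V, circ (circ a b) c - circ a (circ b c)
      = circ (circ b a) c - circ b (circ a c))
    (hNov2 : ∀ a b c : V, circ (circ a b) c = circ (circ a c) b)
    -- Lie algebra axioms for `[·,·] = br`
    (hSkew : ∀ a b : V, br a b = - br b a)
    (hJacobi : ∀ a b c : V, br (br a b) c + br (br b c) a + br (br c a) b = 0)
    -- compatibility condition of the Gel'fand–Dorfman bialgebra
    (hCompat : ∀ a b c : V, br (circ a b) c - br (circ a c) b + circ (br a b) c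
      - circ (br a c) b - circ a (br b c) = 0)
    -- every element of `V` is a finite sum of products `y ∘ z`
    (hspan : AddSubmonoid.closure {x : V | ∃ u v : V, circ u v = x} = ⊤)
    (α : V →ₗ[ℂ] V →ₗ[ℂ] Polynomial ℂ)
    -- condition (S)
    (hS : ∀ (a b : V) (l : ℂ), (α a b).eval l = - (α b a).eval (-l))
    -- condition (C)
    (hC : ∀ (a b c : V) (l m : ℂ),
      l * (α a (circ c b)).eval l
        + m * (α a (circ b c + circ c b)).eval l
        + (α a (br c b)).eval l
        - m * (α b (circ c a)).eval m
        - l * (α b (circ a c + circ c a)).eval m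
        - (α b (br c a)).eval m
      = (-l - m) * (α (circ b a) c).eval (l + m)
        + l * (α (circ a b + circ b a) c).eval (l + m)
        + (α (br b a) c).eval (l + m)) :
    ∃ α0 α1 α2 α3 : V →ₗ[ℂ] V →ₗ[ℂ] ℂ,
      (∀ (a b : V) (l : ℂ),
        (α a b).eval l = α0 a b + l * α1 a b + l ^ 2 * α2 a b + l ^ 3 * α3 a b)
      -- (I1): `α_i(a,b) = (−1)^{i+1} α_i(b,a)` for `i = 0, 1, 2, 3`
      ∧ (∀ a b : V, α0 a b = - α0 b a)
      ∧ (∀ a b : V, α1 a b = α1 b a)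
      ∧ (∀ a b : V, α2 a b = - α2 b a)
      ∧ (∀ a b : V, α3 a b = α3 b a)
      -- (I2)
      ∧ (∀ a b c : V, α3 a (circ c b) = α3 (circ a b) c ∧ α3 (circ a b) c = α3 (circ b a) c)
      -- (I3)
      ∧ (∀ a b c : V, α2 a (circ c b) + α3 a (br c b) = α2 (circ a b) c + α3 (br b a) c)
      -- (I4)
      ∧ (∀ a b c : V, α2 a (circ b c + circ c b) + α2 (circ b a) c
          = 2 * α2 (circ a b) c + 3 * α3 (br b a) c)
      -- (I5)
      ∧ (∀ a b c : V, α1 a (circ c b) + α2 a (br c b) = α1 (circ a b) c + α2 (br b a) c)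
      -- (I6)
      ∧ (∀ a b c : V, α1 a (circ b c + circ c b) - α1 b (circ a c + circ c a)
          = - α1 (circ b a) c + α1 (circ a b) c + 2 * α2 (br b a) c)
      -- (I7)
      ∧ (∀ a b c : V, α0 a (circ c b) + α1 a (br c b) - α0 b (circ a c + circ c a)
          = α0 (circ a b) c + α1 (br b a) c)
      -- (I8)
      ∧ (∀ a b c : V, α0 a (br c b) - α0 b (br c a) = α0 (br b a) c) :=
  stmt_2_general circ br hspan α hS hC
end

section
/- Let (V,∘) be a Novikov algebra over ℂ (possibly infinite-dimensional) such that every element of V is a finite sum of products y∘z with y, z ∈ V. Let α : V×V → ℂ[λ] be a bilinear map into polynomials in λ satisfying, for all a,b,c ∈ V and λ,μ ∈ ℂ: (S) α(a,b)(λ) = −α(b,a)(−λ), and (C₀) λ α(a, c∘b)(λ) + μ α(a, b∗c)(λ) − μ α(b, c∘a)(μ) − λ α(b, a∗c)(μ) = (−λ−μ) α(b∘a, c)(λ+μ) + λ α(a∗b, c)(λ+μ). Then there exist bilinear forms α_0, α_1, α_2, α_3 : V×V → ℂ with α(a,b)(λ) = Σ_{i=0}^3 λ^i α_i(a,b) for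 all a,b ∈ V and λ ∈ ℂ, and the identities (N1)–(N5) hold for all a, b, c ∈ V. -/
/-!
Fix a, b, c and read (C₀) as a polynomial identity in the two variables λ, μ. Of its six
terms only `(-λ-μ) α(b∘a, c)(λ+μ)` and `λ α(a∗b, c)(λ+μ)` contain monomials `λ^j μ^k` with
`j, k ≥ 2`.
Comparing the coefficients of `λ²μ^(n-1)` and `λ³μ^(n-2)` forces the `λⁿ`-coefficient of
`α(b∘a, c)` to vanish for `n ≥ 4`; since products span `V`, every `α(x, y)` is a cubic. The
identities (N1)–(N5) are then read off from (S) and from the coefficients of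
`λ, μ², μ³, μ⁴, λ²μ, λ²μ²` in (C₀).
-/

open Polynomial

theorem Polynomial.coeff_eq_neg_of_eval_eq_neg_eval_neg {R : Type*} [CommRing R] [IsDomain R]
    [Infinite R] {p q : R[X]} (h : ∀ l, p.eval l = -q.eval (-l)) (n : ℕ) :
    p.coeff n = -((-1) ^ n * q.coeff n) := by
  have hpq : p = -q.comp (C (-1) * X) := Polynomial.funext fun l ↦ by simpa using h l
  rw [hpq, coeff_neg, comp_C_mul_X_coeff, mul_comm]

/-- Condition (C₀) for one triple `a, b, c`, with `f = α(a, c∘b)`, `g = α(a, b∗c)`,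
`p = α(b, c∘a)`, `q = α(b, a∗c)`, `P = α(b∘a, c)` and `Q = α(a∗b, c)`. -/
def C0Identity {R : Type*} [CommRing R] (f g p q P Q : R[X]) : Prop :=
  ∀ l m : R, l * f.eval l + m * g.eval l - m * p.eval m - l * q.eval m
    = (-l - m) * P.eval (l + m) + l * Q.eval (l + m)

namespace C0Identity

variable {R : Type*} [CommRing R] [IsDomain R] [Infinite R]

variable {f g p q P Q : R[X]} (h : C0Identity f g p q P Q)
include h

/-- For fixed `λ`, (C₀) as a polynomial identity in `μ`. -/
theorem taylor_eq (l : R) :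
    C (l * f.eval l) + C (g.eval l) * X - X * p - C l * q
      = -taylor l (X * P) + C l * taylor l Q := by
  refine Polynomial.funext fun m ↦ ?_
  have hlm := h l m
  rw [add_comm l m] at hlm
  simp only [eval_add, eval_sub, eval_mul, eval_neg, eval_C, eval_X, taylor_eval]
  linear_combination hlm

/-- The coefficient of `μ^(k+2)` in `taylor_eq`, as a polynomial identity in `λ`. -/
theorem hasseDeriv_add_two_eq (k : ℕ) :
    -C (p.coeff (k + 1)) - C (q.coeff (k + 2)) * X
      = -hasseDeriv (k + 2) (X * P) + X * hasseDeriv (k + 2) Q := by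
  refine Polynomial.funext fun l ↦ ?_
  have hk := congrArg (coeff · (k + 2)) (h.taylor_eq l)
  simp only [coeff_add, coeff_sub, coeff_neg, coeff_C_mul, coeff_X_mul, coeff_X, coeff_C,
    taylor_coeff] at hk
  simp at hk ⊢
  linear_combination hk

theorem hasseDeriv_one_eq :
    g - C (p.coeff 0) - C (q.coeff 1) * X
      = -hasseDeriv 1 (X * P) + X * hasseDeriv 1 Q := by
  refine Polynomial.funext fun l ↦ ?_
  have hk := congrArg (coeff · 1) (h.taylor_eq l)
  simp only [coeff_add, coeff_sub, coeff_neg, coeff_C_mul, coeff_X_mul, coeff_X, coeff_C,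
    taylor_coeff] at hk
  simp [-hasseDeriv_one] at hk ⊢
  linear_combination hk

/-- The coefficient of `λ^(i+2) μ^(k+2)` in (C₀). -/
theorem choose_mul_coeff_eq (i k : ℕ) :
    ((i + k + 4).choose (i + 2) : R) * P.coeff (i + k + 3)
      = ((i + k + 3).choose (i + 1) : R) * Q.coeff (i + k + 3) := by
  have hc := congrArg (coeff · (i + 2)) (h.hasseDeriv_add_two_eq k)
  obtain ⟨e1, e2⟩ : i + 2 + (k + 2) = i + k + 4 ∧ i + 1 + (k + 2) = i + k + 3 := by omega
  simp only [coeff_add, coeff_sub, coeff_neg, coeff_C, coeff_C_mul, coeff_X_mul, hasseDeriv_coeff,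
    e1, e2, coeff_X] at hc
  rw [Nat.choose_symm_of_eq_add (by omega : i + k + 4 = k + 2 + (i + 2)),
    Nat.choose_symm_of_eq_add (by omega : i + k + 3 = k + 2 + (i + 1))] at hc
  simp at hc
  linear_combination hc

theorem coeff_eq_zero_of_four_le [CharZero R] {n : ℕ} (hn : 4 ≤ n) : P.coeff n = 0 := by
  obtain ⟨n, rfl⟩ : ∃ m, n = m + 4 := ⟨n - 4, by omega⟩
  have h2 : ((n + 5).choose 2 : R) * P.coeff (n + 4) = (n + 4 : ℕ) * Q.coeff (n + 4) := by
    simpa [add_assoc] using h.choose_mul_coeff_eq 0 (n + 1)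
  have h3 : ((n + 5).choose 3 : R) * P.coeff (n + 4)
      = ((n + 4).choose 2 : R) * Q.coeff (n + 4) := by
    simpa [add_assoc, add_comm 1 n] using h.choose_mul_coeff_eq 1 n
  have c2 : ((n + 5).choose 2 : R) * 2 = (n + 5 : ℕ) * (n + 4 : ℕ) := by
    exact_mod_cast (by simpa using (Nat.add_one_mul_choose_eq (n + 4) 1).symm :
      (n + 5).choose 2 * 2 = (n + 5) * (n + 4))
  have c3 : ((n + 5).choose 3 : R) * 3 = (n + 5 : ℕ) * ((n + 4).choose 2 : ℕ) := by
    exact_mod_cast (Nat.add_one_mul_choose_eq (n + 4) 2).symm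
  -- Up to the factors `n+4` and `C(n+4, 2)`, `h2` and `h3` say `(n+5) P = 2 Q` and `(n+5) P = 3 Q`
  -- for the coefficients `P, Q` of degree `n+4`.
  have key : (((n + 4) * (n + 4).choose 2 * (n + 5) : ℕ) : R) * P.coeff (n + 4) = 0 := by
    push_cast at h2 c2 c3 ⊢
    linear_combination 6 * ((n + 4).choose 2 : R) * h2
      - 3 * ((n + 4).choose 2 : R) * P.coeff (n + 4) * c2
      - 6 * ((n : R) + 4) * h3 + 2 * ((n : R) + 4) * P.coeff (n + 4) * c3
  refine (mul_eq_zero.mp key).resolve_left (Nat.cast_ne_zero.mpr ?_)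
  have := Nat.choose_pos (show 2 ≤ n + 4 by omega)
  positivity

theorem coeff_add_one_eq (k : ℕ) : p.coeff (k + 1) = P.coeff (k + 1) := by
  have hc := congrArg (coeff · 0) (h.hasseDeriv_add_two_eq k)
  simp only [coeff_add, coeff_sub, coeff_neg, coeff_C_mul, coeff_C, coeff_X, hasseDeriv_coeff,
    zero_add, coeff_X_mul] at hc
  simpa using hc

theorem two_mul_coeff_three [CharZero R] : 2 * P.coeff 3 = Q.coeff 3 := by
  have hc := h.choose_mul_coeff_eq 0 0
  norm_num [Nat.choose] at hc
  have h3 : (3 : R) * (2 * P.coeff 3 - Q.coeff 3) = 0 := by linear_combination hc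
  exact sub_eq_zero.mp ((mul_eq_zero.mp h3).resolve_left (by norm_num))

theorem coeff_two : g.coeff 2 = -3 * P.coeff 2 + 2 * Q.coeff 2 := by
  have hc := congrArg (coeff · 2) h.hasseDeriv_one_eq
  simp [coeff_X_mul, -hasseDeriv_one, hasseDeriv_coeff] at hc
  linear_combination hc

theorem coeff_zero : f.coeff 0 - q.coeff 0 = -P.coeff 0 + Q.coeff 0 := by
  have h0 : X * f - C (q.coeff 0) * X = -(X * P) + X * Q := Polynomial.funext fun l ↦ by
    have hl := h l 0
    simp [← coeff_zero_eq_eval_zero] at hl ⊢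
    linear_combination hl
  simpa [coeff_X_mul] using congrArg (coeff · 1) h0

end C0Identity

theorem Polynomial.eval_eq_of_natDegree_le_three_s3 {R : Type*} [CommSemiring R] {p : R[X]}
    (hp : p.natDegree ≤ 3) (l : R) :
    p.eval l = p.coeff 0 + l * p.coeff 1 + l ^ 2 * p.coeff 2 + l ^ 3 * p.coeff 3 := by
  rw [eval_eq_sum_range' (Nat.lt_succ_of_le hp)]
  simp only [Finset.sum_range_succ, Finset.sum_range_zero]
  ring

theorem Polynomial.natDegree_le_of_closure_eq_top {M R : Type*} [AddCommMonoid M] [Semiring R]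
    {S : Set M} (hS : AddSubmonoid.closure S = ⊤) (φ : M →+ R[X]) {n : ℕ}
    (h : ∀ x ∈ S, (φ x).natDegree ≤ n) (x : M) : (φ x).natDegree ≤ n := by
  induction (hS ▸ AddSubmonoid.mem_top x : x ∈ AddSubmonoid.closure S)
    using AddSubmonoid.closure_induction with
  | mem y hy => exact h y hy
  | zero => simp
  | add y z _ _ hy hz => rw [map_add]; exact natDegree_add_le_of_degree_le hy hz

theorem stmt_3_general {V : Type*} [AddCommGroup V] [Module ℂ V]
    (circ : V →ₗ[ℂ] V →ₗ[ℂ] V)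
    -- every element of `V` is a finite sum of products `y ∘ z`
    (hspan : AddSubmonoid.closure {x : V | ∃ u v : V, circ u v = x} = ⊤)
    (α : V →ₗ[ℂ] V →ₗ[ℂ] Polynomial ℂ)
    -- condition (S)
    (hS : ∀ (a b : V) (l : ℂ), (α a b).eval l = - (α b a).eval (-l))
    -- condition (C₀)
    (hC : ∀ (a b c : V) (l m : ℂ),
      l * (α a (circ c b)).eval l
        + m * (α a (circ b c + circ c b)).eval l
        - m * (α b (circ c a)).eval m
        - l * (α b (circ a c + circ c a)).eval m
      = (-l - m) * (α (circ b a) c).eval (l + m)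
        + l * (α (circ a b + circ b a) c).eval (l + m)) :
    ∃ α0 α1 α2 α3 : V →ₗ[ℂ] V →ₗ[ℂ] ℂ,
      (∀ (a b : V) (l : ℂ),
        (α a b).eval l = α0 a b + l * α1 a b + l ^ 2 * α2 a b + l ^ 3 * α3 a b)
      -- (N1): `α_i(a,b) = (−1)^{i+1} α_i(b,a)` for `i = 0, 1, 2, 3`
      ∧ (∀ a b : V, α0 a b = - α0 b a)
      ∧ (∀ a b : V, α1 a b = α1 b a)
      ∧ (∀ a b : V, α2 a b = - α2 b a)
      ∧ (∀ a b : V, α3 a b = α3 b a)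
      -- (N2)
      ∧ (∀ a b c : V, α3 a (circ c b) = α3 (circ a b) c ∧ α3 (circ a b) c = α3 (circ b a) c)
      -- (N3)
      ∧ (∀ a b c : V, α2 a (circ b c) + α2 (circ b a) c = α2 (circ a b) c
          ∧ α2 (circ a b) c = α2 a (circ c b))
      -- (N4)
      ∧ (∀ a b c : V, α1 a (circ c b) = α1 (circ a b) c)
      -- (N5)
      ∧ (∀ a b c : V, α0 (circ c a) b - α0 (circ c b) a
          = α0 (circ a b) c - α0 (circ a c) b) := by
  have hC' (a b c : V) : C0Identity (α a (circ c b)) (α a (circ b c + circ c b))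
      (α b (circ c a)) (α b (circ a c + circ c a)) (α (circ b a) c)
      (α (circ a b + circ b a) c) := hC a b c
  have hdeg (x y : V) : (α x y).natDegree ≤ 3 := by
    refine natDegree_le_of_closure_eq_top hspan (α.flip y).toAddMonoidHom ?_ x
    rintro _ ⟨u, v, rfl⟩
    exact natDegree_le_iff_coeff_eq_zero.mpr fun _ hn ↦ (hC' v u y).coeff_eq_zero_of_four_le hn
  have hskew (a b : V) (n : ℕ) := coeff_eq_neg_of_eval_eq_neg_eval_neg (hS a b) n
  refine ⟨α.compr₂ (lcoeff ℂ 0), α.compr₂ (lcoeff ℂ 1), α.compr₂ (lcoeff ℂ 2),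
    α.compr₂ (lcoeff ℂ 3), fun a b ↦ eval_eq_of_natDegree_le_three_s3 (hdeg a b),
    fun a b ↦ ?_, fun a b ↦ ?_, fun a b ↦ ?_, fun a b ↦ ?_,
    fun a b c ↦ ⟨?_, ?_⟩, fun a b c ↦ ⟨?_, ?_⟩, fun a b c ↦ ?_, fun a b c ↦ ?_⟩ <;>
    simp only [LinearMap.compr₂_apply, lcoeff_apply]
  · linear_combination hskew a b 0
  · linear_combination hskew a b 1
  · linear_combination hskew a b 2
  · linear_combination hskew a b 3
  · exact (hC' b a c).coeff_add_one_eq 2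
  · have h3 := (hC' a b c).two_mul_coeff_three
    simp only [map_add, LinearMap.add_apply, coeff_add] at h3
    linear_combination -h3
  · have h2 := (hC' a b c).coeff_two
    simp only [map_add, LinearMap.add_apply, coeff_add] at h2
    linear_combination h2 - (hC' b a c).coeff_add_one_eq 1
  · exact ((hC' b a c).coeff_add_one_eq 1).symm
  · exact (hC' b a c).coeff_add_one_eq 0
  · have h0 := (hC' a b c).coeff_zero
    simp only [map_add, LinearMap.add_apply, coeff_add] at h0
    linear_combination h0 + hskew (circ c a) b 0 - hskew (circ c b) a 0 + hskew (circ a c) b 0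

/-- Let `(V,∘)` be a Novikov algebra over `ℂ` (possibly
infinite-dimensional) in which every element is a finite sum of products `y∘z`.
Let `α : V×V → ℂ[λ]` be a bilinear map into polynomials satisfying (S) and (C₀).
Then there are bilinear forms `α_0, α_1, α_2, α_3 : V×V → ℂ` with
`α(a,b)(λ) = Σ_{i=0}^3 λ^i α_i(a,b)`, and the identities (N1)–(N5) hold. -/
theorem stmt_3 {V : Type*} [AddCommGroup V] [Module ℂ V]
    (circ : V →ₗ[ℂ] V →ₗ[ℂ] V)
    -- Novikov algebra axioms for `∘ = circ`
    (hNov1 : ∀ a b c : V, circ (circ a b) c - circ a (circ b c)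
      = circ (circ b a) c - circ b (circ a c))
    (hNov2 : ∀ a b c : V, circ (circ a b) c = circ (circ a c) b)
    -- every element of `V` is a finite sum of products `y ∘ z`
    (hspan : AddSubmonoid.closure {x : V | ∃ u v : V, circ u v = x} = ⊤)
    (α : V →ₗ[ℂ] V →ₗ[ℂ] Polynomial ℂ)
    -- condition (S)
    (hS : ∀ (a b : V) (l : ℂ), (α a b).eval l = - (α b a).eval (-l))
    -- condition (C₀)
    (hC : ∀ (a b c : V) (l m : ℂ),
      l * (α a (circ c b)).eval l
        + m * (α a (circ b c + circ c b)).eval l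
        - m * (α b (circ c a)).eval m
        - l * (α b (circ a c + circ c a)).eval m
      = (-l - m) * (α (circ b a) c).eval (l + m)
        + l * (α (circ a b + circ b a) c).eval (l + m)) :
    ∃ α0 α1 α2 α3 : V →ₗ[ℂ] V →ₗ[ℂ] ℂ,
      (∀ (a b : V) (l : ℂ),
        (α a b).eval l = α0 a b + l * α1 a b + l ^ 2 * α2 a b + l ^ 3 * α3 a b)
      -- (N1): `α_i(a,b) = (−1)^{i+1} α_i(b,a)` for `i = 0, 1, 2, 3`
      ∧ (∀ a b : V, α0 a b = - α0 b a)
      ∧ (∀ a b : V, α1 a b = α1 b a)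
      ∧ (∀ a b : V, α2 a b = - α2 b a)
      ∧ (∀ a b : V, α3 a b = α3 b a)
      -- (N2)
      ∧ (∀ a b c : V, α3 a (circ c b) = α3 (circ a b) c ∧ α3 (circ a b) c = α3 (circ b a) c)
      -- (N3)
      ∧ (∀ a b c : V, α2 a (circ b c) + α2 (circ b a) c = α2 (circ a b) c
          ∧ α2 (circ a b) c = α2 a (circ c b))
      -- (N4)
      ∧ (∀ a b c : V, α1 a (circ c b) = α1 (circ a b) c)
      -- (N5)
      ∧ (∀ a b c : V, α0 (circ c a) b - α0 (circ c b) a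
          = α0 (circ a b) c - α0 (circ a c) b) :=
  stmt_3_general circ hspan α hS hC
end

section
/- Let (V,∘) be a Novikov algebra over ℂ with a unit element 1 (i.e. 1∘a = a∘1 = a for all a ∈ V). Let α_0, α_1, α_2, α_3 : V×V → ℂ be bilinear forms satisfying the identities (N1)–(N5). Then α_2(a,b) = 0 and α_0(a,b) = 0 for all a, b ∈ V. -/
/-- Let `(V,∘)` be a Novikov algebra over `ℂ` with a unit element `1`
(i.e. `1∘a = a∘1 = a` for all `a`).  If bilinear forms `α_0, α_1, α_2, α_3` satisfy the
identities (N1)–(N5), then `α_2 = 0` and `α_0 = 0`. -/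
theorem stmt_4 {V : Type*} [AddCommGroup V] [Module ℂ V]
    (circ : V →ₗ[ℂ] V →ₗ[ℂ] V)
    -- Novikov algebra axioms for `∘ = circ`
    (hNov1 : ∀ a b c : V, circ (circ a b) c - circ a (circ b c)
      = circ (circ b a) c - circ b (circ a c))
    (hNov2 : ∀ a b c : V, circ (circ a b) c = circ (circ a c) b)
    -- a unit element
    (e : V) (hunit : ∀ a : V, circ e a = a ∧ circ a e = a)
    (α0 α1 α2 α3 : V →ₗ[ℂ] V →ₗ[ℂ] ℂ)
    -- (N1): `α_i(a,b) = (−1)^{i+1} α_i(b,a)` for `i = 0, 1, 2, 3`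
    (hN1_0 : ∀ a b : V, α0 a b = - α0 b a)
    (hN1_1 : ∀ a b : V, α1 a b = α1 b a)
    (hN1_2 : ∀ a b : V, α2 a b = - α2 b a)
    (hN1_3 : ∀ a b : V, α3 a b = α3 b a)
    -- (N2)
    (hN2 : ∀ a b c : V, α3 a (circ c b) = α3 (circ a b) c ∧ α3 (circ a b) c = α3 (circ b a) c)
    -- (N3)
    (hN3 : ∀ a b c : V, α2 a (circ b c) + α2 (circ b a) c = α2 (circ a b) c
      ∧ α2 (circ a b) c = α2 a (circ c b))
    -- (N4)
    (hN4 : ∀ a b c : V, α1 a (circ c b) = α1 (circ a b) c)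
    -- (N5)
    (hN5 : ∀ a b c : V, α0 (circ c a) b - α0 (circ c b) a
      = α0 (circ a b) c - α0 (circ a c) b) :
    ∀ a b : V, α2 a b = 0 ∧ α0 a b = 0 := by
  have key : ∀ x y : V, α0 (circ x y) e = 3 * α0 x y := by
    intro x y
    have h := hN5 e y x
    rw [(hunit x).2, (hunit y).1, (hunit x).1] at h
    have hs := hN1_0 y x
    linear_combination -h - hs
  intro a b
  constructor
  · have h := (hN3 a e b).1
    rw [(hunit b).1, (hunit a).1, (hunit a).2] at h
    linear_combination h
  · have h2 := key (circ a b) e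
    rw [(hunit (circ a b)).2] at h2
    have h3 := key a b
    linear_combination -h3/3 - h2/6
end

section
/- Let (V,∘,[·,·]) be a Gel'fand–Dorfman bialgebra over ℂ. On the space 𝓛(V) = ⊕_{m∈ℤ} V, whose elements are written as finite sums of symbols a⊗t^m (a ∈ V, m ∈ ℤ), define a bilinear bracket by [a⊗t^m, b⊗t^n] = [a,b]⊗t^{m+n} + m(a∘b)⊗t^{m+n−1} − n(b∘a)⊗t^{m+n−1}. Then this bracket is skew-symmetric and satisfies the Jacobi identity; that is, 𝓛(V) is a Lie algebra. -/
/-!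
Since the bracket is biadditive, skew-symmetry and the Jacobi identity reduce to monomials
`a⊗t^m`. For three monomials of total degree `N = m + n + k` the Jacobiator has components only
in degrees `N`, `N - 1` and `N - 2`: the first vanishes by the Jacobi identity of `[·,·]`, the
second by the compatibility condition (together with skew-symmetry of `[·,·]`), and the third
by the two Novikov identities.
-/

/-- The bracket on `𝓛(V) = ⊕_{m∈ℤ} V` (an element `x : ℤ →₀ V` represents
`Σ_m (x m)⊗t^m`), determined by
`[a⊗t^m, b⊗t^n] = [a,b]⊗t^{m+n} + (m(a∘b) − n(b∘a))⊗t^{m+n−1}`. -/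
noncomputable def loopBracket {V : Type*} [AddCommGroup V] [Module ℂ V]
    (circ br : V →ₗ[ℂ] V →ₗ[ℂ] V) (x y : ℤ →₀ V) : ℤ →₀ V :=
  x.sum fun m a => y.sum fun n b =>
    Finsupp.single (m + n) (br a b)
      + Finsupp.single (m + n - 1) ((m : ℂ) • circ a b - (n : ℂ) • circ b a)

section LoopBracket

variable {V : Type*} [AddCommGroup V] [Module ℂ V] (circ br : V →ₗ[ℂ] V →ₗ[ℂ] V)

theorem loopBracket_single_single (m n : ℤ) (a b : V) :
    loopBracket circ br (Finsupp.single m a) (Finsupp.single n b)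
      = Finsupp.single (m + n) (br a b)
        + Finsupp.single (m + n - 1) ((m : ℂ) • circ a b - (n : ℂ) • circ b a) := by
  simp [loopBracket]

theorem loopBracket_add_left (x x' y : ℤ →₀ V) :
    loopBracket circ br (x + x') y = loopBracket circ br x y + loopBracket circ br x' y := by
  refine Finsupp.sum_add_index' (by simp) fun m a₁ a₂ => ?_
  rw [← Finsupp.sum_add]
  refine Finsupp.sum_congr fun n _ => ?_
  simp only [map_add, LinearMap.add_apply, Finsupp.single_add, smul_add]
  rw [add_sub_add_comm, Finsupp.single_add]
  abel

theorem loopBracket_add_right (x y y' : ℤ →₀ V) :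
    loopBracket circ br x (y + y') = loopBracket circ br x y + loopBracket circ br x y' := by
  rw [loopBracket, loopBracket, loopBracket, ← Finsupp.sum_add]
  refine Finsupp.sum_congr fun m _ => Finsupp.sum_add_index' (by simp) fun n b₁ b₂ => ?_
  simp only [map_add, LinearMap.add_apply, Finsupp.single_add, smul_add]
  rw [add_sub_add_comm, Finsupp.single_add]
  abel

theorem loopBracket_zero_left (y : ℤ →₀ V) : loopBracket circ br 0 y = 0 :=
  Finsupp.sum_zero_index

theorem loopBracket_zero_right (x : ℤ →₀ V) : loopBracket circ br x 0 = 0 := by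
  simp [loopBracket]


variable {circ br}

theorem loopBracket_add_swap (hSkew : ∀ a b : V, br a b = - br b a) (x y : ℤ →₀ V) :
    loopBracket circ br x y + loopBracket circ br y x = 0 := by
  induction x using Finsupp.induction_linear with
  | zero => simp [loopBracket_zero_left, loopBracket_zero_right]
  | add p q hp hq =>
    rw [loopBracket_add_left, loopBracket_add_right, add_add_add_comm, hp, hq, add_zero]
  | single m a =>
    induction y using Finsupp.induction_linear with
    | zero => simp [loopBracket_zero_left, loopBracket_zero_right]
    | add p q hp hq =>
      rw [loopBracket_add_right, loopBracket_add_left, add_add_add_comm, hp, hq, add_zero]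
    | single n b =>
      rw [loopBracket_single_single, loopBracket_single_single, add_comm n m,
        add_add_add_comm, ← Finsupp.single_add, ← Finsupp.single_add, hSkew a b]
      simp

theorem loopBracket_jacobi_single
    (hNov1 : ∀ a b c : V, circ (circ a b) c - circ a (circ b c)
      = circ (circ b a) c - circ b (circ a c))
    (hNov2 : ∀ a b c : V, circ (circ a b) c = circ (circ a c) b)
    (hSkew : ∀ a b : V, br a b = - br b a)
    (hJacobi : ∀ a b c : V, br (br a b) c + br (br b c) a + br (br c a) b = 0)
    (hCompat : ∀ a b c : V, br (circ a b) c - br (circ a c) b + circ (br a b) c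
      - circ (br a c) b - circ a (br b c) = 0)
    (m n k : ℤ) (a b c : V) :
    loopBracket circ br (loopBracket circ br (.single m a) (.single n b)) (.single k c)
      + loopBracket circ br (loopBracket circ br (.single n b) (.single k c)) (.single m a)
      + loopBracket circ br (loopBracket circ br (.single k c) (.single m a)) (.single n b)
      = 0 := by
  have hSkew_circ (u v w : V) : circ (br u v) w = - circ (br v u) w := by
    rw [hSkew u v, map_neg, LinearMap.neg_apply]
  simp only [loopBracket_single_single, loopBracket_add_left]
  ext j
  simp only [Finsupp.coe_add, Pi.add_apply, Finsupp.single_apply, Finsupp.coe_zero, Pi.zero_apply]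
  simp only [show n + k + m = m + n + k by ring, show k + m + n = m + n + k by ring,
    show m + n - 1 + k = m + n + k - 1 by ring, show n + k - 1 + m = m + n + k - 1 by ring,
    show k + m - 1 + n = m + n + k - 1 by ring, show m + n + k - 1 - 1 = m + n + k - 2 by ring]
  simp only [map_sub, map_smul, LinearMap.sub_apply, LinearMap.smul_apply]
  split_ifs
  all_goals try omega
  all_goals simp only [add_zero, zero_add]
  · linear_combination (norm := module) hJacobi a b c
  · push_cast
    linear_combination (norm := module) (m : ℂ) • hCompat a b c + (n : ℂ) • hCompat b c a
      + (k : ℂ) • hCompat c a b + (m : ℂ) • hSkew_circ c a b + (n : ℂ) • hSkew_circ a b c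
      + (k : ℂ) • hSkew_circ b c a
  · push_cast
    linear_combination (norm := module) ((m : ℂ) ^ 2 - m) • hNov2 a b c
      + ((n : ℂ) ^ 2 - n) • hNov2 b c a + ((k : ℂ) ^ 2 - k) • hNov2 c a b
      + ((m : ℂ) * n) • hNov1 a b c + ((n : ℂ) * k) • hNov1 b c a + ((k : ℂ) * m) • hNov1 c a b


theorem loopBracket_jacobi_of_single
    (hsingle : ∀ (m n k : ℤ) (a b c : V),
      loopBracket circ br (loopBracket circ br (.single m a) (.single n b)) (.single k c)
        + loopBracket circ br (loopBracket circ br (.single n b) (.single k c)) (.single m a)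
        + loopBracket circ br (loopBracket circ br (.single k c) (.single m a)) (.single n b)
        = 0)
    (x y z : ℤ →₀ V) :
    loopBracket circ br (loopBracket circ br x y) z
      + loopBracket circ br (loopBracket circ br y z) x
      + loopBracket circ br (loopBracket circ br z x) y = 0 := by
  induction x using Finsupp.induction_linear with
  | zero => simp [loopBracket_zero_left, loopBracket_zero_right]
  | add p q hp hq =>
    simp only [loopBracket_add_left, loopBracket_add_right]
    linear_combination (norm := abel) hp + hq
  | single m a =>
    induction y using Finsupp.induction_linear with
    | zero => simp [loopBracket_zero_left, loopBracket_zero_right]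
    | add p q hp hq =>
      simp only [loopBracket_add_left, loopBracket_add_right]
      linear_combination (norm := abel) hp + hq
    | single n b =>
      induction z using Finsupp.induction_linear with
      | zero => simp [loopBracket_zero_left, loopBracket_zero_right]
      | add p q hp hq =>
        simp only [loopBracket_add_left, loopBracket_add_right]
        linear_combination (norm := abel) hp + hq
      | single k c => exact hsingle m n k a b c

end LoopBracket

/-- Let `(V,∘,[·,·])` be a Gel'fand–Dorfman bialgebra over `ℂ`.
Then the bracket `[a⊗t^m, b⊗t^n] = [a,b]⊗t^{m+n} + m(a∘b)⊗t^{m+n−1} − n(b∘a)⊗t^{m+n−1}`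
on `𝓛(V) = ⊕_{m∈ℤ} V` is skew-symmetric and satisfies the Jacobi identity; that is,
`𝓛(V)` is a Lie algebra. -/
theorem stmt_7 {V : Type*} [AddCommGroup V] [Module ℂ V]
    (circ br : V →ₗ[ℂ] V →ₗ[ℂ] V)
    -- Novikov algebra axioms for `∘ = circ`
    (hNov1 : ∀ a b c : V, circ (circ a b) c - circ a (circ b c)
      = circ (circ b a) c - circ b (circ a c))
    (hNov2 : ∀ a b c : V, circ (circ a b) c = circ (circ a c) b)
    -- Lie algebra axioms for `[·,·] = br`
    (hSkew : ∀ a b : V, br a b = - br b a)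
    (hJacobi : ∀ a b c : V, br (br a b) c + br (br b c) a + br (br c a) b = 0)
    -- compatibility condition of the Gel'fand–Dorfman bialgebra
    (hCompat : ∀ a b c : V, br (circ a b) c - br (circ a c) b + circ (br a b) c
      - circ (br a c) b - circ a (br b c) = 0) :
    -- skew-symmetry
    (∀ x y : ℤ →₀ V, loopBracket circ br x y = - loopBracket circ br y x)
    -- Jacobi identity
    ∧ (∀ x y z : ℤ →₀ V,
        loopBracket circ br (loopBracket circ br x y) z
          + loopBracket circ br (loopBracket circ br y z) x
          + loopBracket circ br (loopBracket circ br z x) y = 0) :=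
  ⟨fun x y => eq_neg_of_add_eq_zero_left (loopBracket_add_swap hSkew x y),
    loopBracket_jacobi_of_single
      (loopBracket_jacobi_single hNov1 hNov2 hSkew hJacobi hCompat)⟩
end

section
/- Let α, β ∈ ℂ and let V = ℂL ⊕ ℂW be the Gel'fand–Dorfman bialgebra with Novikov product L∘L = L, L∘W = (α−1)W, W∘L = W, W∘W = 0, and Lie bracket [L,L] = [W,W] = 0, [W,L] = βW = −[L,W]. Assume that either α ∉ {0,1,2}, or (α = 1 and β ≠ 0), or (α = 2 and β ≠ 0). Then bilinear forms α_0, α_1, α_2, α_3 : V×V → ℂ satisfy the identities (I1)–(I8) if and only if there exist A, B, C ∈ ℂ such that α_3(L,L) = A, α_1(L,L) = B, α_1(L,W) = α_1(W,L) = C, α_0(L,W) = −α_0(W,L) = (β/α)·C, and α_3(L,W) = α_3(W,L) = α_3(W,W) = 0, α_2 = 0, α_1(W,W) = 0, α_0(L,L) = α_0(W,W) = 0. -/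
/-!
A bilinear form on the two-dimensional space `V` is determined by its four values on `L, W`,
so (I1)–(I8) amount to polynomial equations in sixteen scalars. Evaluating the identities at a
handful of basis triples gives equations of the shape `(α - k) x = 0` and `β x = 0` for the
values that have to vanish; the case hypothesis makes one of the two coefficients nonzero in
each instance, and (I7) at `(L, W, L)` yields `α α_0(L,W) = β α_1(L,W)`. Conversely the
surviving forms satisfy every identity by a polynomial computation.
-/

/-- The Novikov product on `V = ℂL ⊕ ℂW ≅ ℂ × ℂ` (first coordinate = coefficient of
`L`, second = coefficient of `W`) determined by
`L∘L = L`, `L∘W = (α−1)W`, `W∘L = W`, `W∘W = 0`. -/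
def circR (α : ℂ) (u v : ℂ × ℂ) : ℂ × ℂ :=
  (u.1 * v.1, (α - 1) * u.1 * v.2 + u.2 * v.1)

/-- The Lie bracket on `V = ℂL ⊕ ℂW ≅ ℂ × ℂ` determined by
`[L,L] = [W,W] = 0`, `[W,L] = βW = −[L,W]`. -/
def brR (β : ℂ) (u v : ℂ × ℂ) : ℂ × ℂ :=
  (0, β * (u.2 * v.1 - u.1 * v.2))

/-- `L = (1,0)`. -/
def Lgen : ℂ × ℂ := (1, 0)

/-- `W = (0,1)`. -/
def Wgen : ℂ × ℂ := (0, 1)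

/-- The identities (I1)–(I8). -/
def GDIdentities (α β : ℂ) (α0 α1 α2 α3 : (ℂ × ℂ) →ₗ[ℂ] (ℂ × ℂ) →ₗ[ℂ] ℂ) : Prop :=
  (∀ a b : ℂ × ℂ, α0 a b = - α0 b a)
    ∧ (∀ a b : ℂ × ℂ, α1 a b = α1 b a)
    ∧ (∀ a b : ℂ × ℂ, α2 a b = - α2 b a)
    ∧ (∀ a b : ℂ × ℂ, α3 a b = α3 b a)
    ∧ (∀ a b c : ℂ × ℂ, α3 a (circR α c b) = α3 (circR α a b) c
        ∧ α3 (circR α a b) c = α3 (circR α b a) c)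
    ∧ (∀ a b c : ℂ × ℂ, α2 a (circR α c b) + α3 a (brR β c b)
        = α2 (circR α a b) c + α3 (brR β b a) c)
    ∧ (∀ a b c : ℂ × ℂ, α2 a (circR α b c + circR α c b) + α2 (circR α b a) c
        = 2 * α2 (circR α a b) c + 3 * α3 (brR β b a) c)
    ∧ (∀ a b c : ℂ × ℂ, α1 a (circR α c b) + α2 a (brR β c b)
        = α1 (circR α a b) c + α2 (brR β b a) c)
    ∧ (∀ a b c : ℂ × ℂ, α1 a (circR α b c + circR α c b) - α1 b (circR α a c + circR α c a)
        = - α1 (circR α b a) c + α1 (circR α a b) c + 2 * α2 (brR β b a) c)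
    ∧ (∀ a b c : ℂ × ℂ, α0 a (circR α c b) + α1 a (brR β c b) - α0 b (circR α a c + circR α c a)
        = α0 (circR α a b) c + α1 (brR β b a) c)
    ∧ (∀ a b c : ℂ × ℂ, α0 a (brR β c b) - α0 b (brR β c a) = α0 (brR β b a) c)

theorem eq_zero_of_mul_eq_zero_of_mul_eq_zero {M₀ : Type*} [MulZeroClass M₀] [NoZeroDivisors M₀]
    {a b x : M₀} (ha : a * x = 0) (hb : b * x = 0) (hab : a ≠ 0 ∨ b ≠ 0) : x = 0 := by
  rcases hab with hab | hab
  · exact (mul_eq_zero.1 ha).resolve_left hab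
  · exact (mul_eq_zero.1 hb).resolve_left hab

theorem eq_smul_Lgen_add_smul_Wgen (a : ℂ × ℂ) : a = a.1 • Lgen + a.2 • Wgen := by
  ext <;> simp [Lgen, Wgen]

theorem bilin_apply_eq (f : (ℂ × ℂ) →ₗ[ℂ] (ℂ × ℂ) →ₗ[ℂ] ℂ) (a b : ℂ × ℂ) :
    f a b = a.1 * b.1 * f Lgen Lgen + a.1 * b.2 * f Lgen Wgen
      + a.2 * b.1 * f Wgen Lgen + a.2 * b.2 * f Wgen Wgen := by
  conv_lhs => rw [eq_smul_Lgen_add_smul_Wgen a, eq_smul_Lgen_add_smul_Wgen b]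
  simp only [map_add, map_smul, LinearMap.add_apply, LinearMap.smul_apply, smul_eq_mul]
  ring

section MultiplicationTable

variable (α β : ℂ)

theorem circR_Lgen_Lgen : circR α Lgen Lgen = Lgen := by ext <;> simp [circR, Lgen]

theorem circR_Lgen_Wgen : circR α Lgen Wgen = (α - 1) • Wgen := by
  ext <;> simp [circR, Lgen, Wgen]

theorem circR_Wgen_Lgen : circR α Wgen Lgen = Wgen := by ext <;> simp [circR, Lgen, Wgen]

theorem circR_Wgen_Wgen : circR α Wgen Wgen = 0 := by ext <;> simp [circR, Wgen]

theorem brR_Lgen_Lgen : brR β Lgen Lgen = 0 := by ext <;> simp [brR, Lgen]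

theorem brR_Wgen_Wgen : brR β Wgen Wgen = 0 := by ext <;> simp [brR, Wgen]

theorem brR_Wgen_Lgen : brR β Wgen Lgen = β • Wgen := by ext <;> simp [brR, Lgen, Wgen]

theorem brR_Lgen_Wgen : brR β Lgen Wgen = -(β • Wgen) := by ext <;> simp [brR, Lgen, Wgen]

end MultiplicationTable

namespace GDIdentities

variable {α β : ℂ} {α0 α1 α2 α3 : (ℂ × ℂ) →ₗ[ℂ] (ℂ × ℂ) →ₗ[ℂ] ℂ}

theorem α3_Lgen_Wgen_eq_zero (h : GDIdentities α β α0 α1 α2 α3) (hαβ : α - 2 ≠ 0 ∨ β ≠ 0) :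
    α3 Lgen Wgen = 0 := by
  obtain ⟨-, -, -, h3, hI2, hI3, -⟩ := h
  have E1 := (hI2 Lgen Wgen Lgen).2
  have E2 := hI3 Lgen Lgen Wgen
  simp only [circR_Lgen_Lgen, circR_Lgen_Wgen, circR_Wgen_Lgen, brR_Lgen_Lgen, brR_Wgen_Lgen,
    map_smul, map_zero, LinearMap.smul_apply, LinearMap.zero_apply, smul_eq_mul] at E1 E2
  rw [h3 Wgen Lgen] at E1
  exact eq_zero_of_mul_eq_zero_of_mul_eq_zero (by linear_combination E1) (by linear_combination E2)
    hαβ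

theorem α3_Wgen_Wgen_eq_zero (h : GDIdentities α β α0 α1 α2 α3) : α3 Wgen Wgen = 0 := by
  obtain ⟨-, -, -, -, hI2, -⟩ := h
  have E1 := (hI2 Wgen Wgen Lgen).1
  have E2 := (hI2 Wgen Lgen Wgen).2
  simp only [circR_Lgen_Wgen, circR_Wgen_Lgen, circR_Wgen_Wgen, map_smul, map_zero,
    LinearMap.smul_apply, LinearMap.zero_apply, smul_eq_mul] at E1 E2
  linear_combination E2 + E1

theorem α2_eq_zero (h : GDIdentities α β α0 α1 α2 α3) (hαβ : α - 1 ≠ 0 ∨ β ≠ 0) (u v : ℂ × ℂ) :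
    α2 u v = 0 := by
  obtain ⟨-, -, h2, -, -, -, hI4, hI5, -⟩ := h
  have E1 := hI4 Lgen Lgen Wgen
  have E2 := hI5 Lgen Lgen Wgen
  simp only [circR_Lgen_Lgen, circR_Lgen_Wgen, circR_Wgen_Lgen, brR_Lgen_Lgen, brR_Wgen_Lgen,
    map_add, map_smul, map_zero, LinearMap.zero_apply, smul_eq_mul] at E1 E2
  have hLW : α2 Lgen Wgen = 0 :=
    eq_zero_of_mul_eq_zero_of_mul_eq_zero (by linear_combination E1) (by linear_combination E2)
      hαβ
  rw [bilin_apply_eq α2, h2 Wgen Lgen, hLW, self_eq_neg.1 (h2 Lgen Lgen),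
    self_eq_neg.1 (h2 Wgen Wgen)]
  ring

theorem α1_Wgen_Wgen_eq_zero (h : GDIdentities α β α0 α1 α2 α3) (hαβ : α - 1 ≠ 0 ∨ β ≠ 0) :
    α1 Wgen Wgen = 0 := by
  have h2WW := h.α2_eq_zero hαβ Wgen Wgen
  obtain ⟨h0, -, -, -, -, -, -, hI5, -, hI7, -⟩ := h
  have E1 := hI5 Lgen Wgen Wgen
  have E2 := hI7 Lgen Wgen Wgen
  simp only [circR_Lgen_Wgen, circR_Wgen_Lgen, circR_Wgen_Wgen, brR_Wgen_Wgen, brR_Wgen_Lgen,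
    map_add, map_smul, map_zero, LinearMap.smul_apply, smul_eq_mul, h2WW,
    self_eq_neg.1 (h0 Wgen Wgen)] at E1 E2
  exact eq_zero_of_mul_eq_zero_of_mul_eq_zero (by linear_combination -E1) (by linear_combination -E2)
    hαβ

theorem mul_α0_Lgen_Wgen_eq (h : GDIdentities α β α0 α1 α2 α3) :
    α * α0 Lgen Wgen = β * α1 Lgen Wgen := by
  obtain ⟨h0, h1, -, -, -, -, -, -, -, hI7, -⟩ := h
  have E := hI7 Lgen Wgen Lgen
  simp only [circR_Lgen_Lgen, circR_Lgen_Wgen, brR_Lgen_Wgen, brR_Wgen_Lgen, map_add, map_neg,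
    map_smul, LinearMap.smul_apply, smul_eq_mul, h0 Wgen Lgen, h1 Wgen Lgen] at E
  linear_combination E / 2

end GDIdentities

theorem GDIdentities.of_apply_eq {α β A B C c : ℂ} {α0 α1 α2 α3 : (ℂ × ℂ) →ₗ[ℂ] (ℂ × ℂ) →ₗ[ℂ] ℂ}
    (H0 : ∀ a b : ℂ × ℂ, α0 a b = c * (a.1 * b.2 - a.2 * b.1))
    (H1 : ∀ a b : ℂ × ℂ, α1 a b = B * a.1 * b.1 + C * (a.1 * b.2 + a.2 * b.1))
    (H2 : ∀ a b : ℂ × ℂ, α2 a b = 0) (H3 : ∀ a b : ℂ × ℂ, α3 a b = A * a.1 * b.1)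
    (hc : α * c = β * C) : GDIdentities α β α0 α1 α2 α3 := by
  refine ⟨?_, ?_, ?_, ?_, fun _ _ _ => ⟨?_, ?_⟩, ?_, ?_, ?_, ?_, ?I7, ?_⟩
  case I7 =>
    intro a b c
    simp only [H0, H1, circR, brR, Prod.fst_add, Prod.snd_add]
    linear_combination (2 * a.1 * b.2 * c.1 - a.1 * b.1 * c.2 - a.2 * b.1 * c.1) * hc
  all_goals (intros; simp only [H0, H1, H2, H3, circR, brR, Prod.fst_add, Prod.snd_add]; ring)

/-- For the two-dimensional Gel'fand–Dorfman bialgebra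
`V = ℂL ⊕ ℂW` with `L∘L = L`, `L∘W = (α−1)W`, `W∘L = W`, `W∘W = 0`,
`[W,L] = βW = −[L,W]`, and assuming `α ∉ {0,1,2}`, or `α = 1, β ≠ 0`, or
`α = 2, β ≠ 0`: bilinear forms `α_0, α_1, α_2, α_3` satisfy (I1)–(I8) if and only if
there are `A, B, C ∈ ℂ` with `α_3(L,L) = A`, `α_1(L,L) = B`,
`α_1(L,W) = α_1(W,L) = C`, `α_0(L,W) = −α_0(W,L) = (β/α)C`, and all the remaining
values vanish. -/
theorem stmt_15 (α β : ℂ)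
    (hcase : (α ≠ 0 ∧ α ≠ 1 ∧ α ≠ 2) ∨ (α = 1 ∧ β ≠ 0) ∨ (α = 2 ∧ β ≠ 0))
    (α0 α1 α2 α3 : (ℂ × ℂ) →ₗ[ℂ] (ℂ × ℂ) →ₗ[ℂ] ℂ) :
    -- the identities (I1)–(I8) ...
    ((∀ a b : ℂ × ℂ, α0 a b = - α0 b a)
      ∧ (∀ a b : ℂ × ℂ, α1 a b = α1 b a)
      ∧ (∀ a b : ℂ × ℂ, α2 a b = - α2 b a)
      ∧ (∀ a b : ℂ × ℂ, α3 a b = α3 b a)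
      -- (I2)
      ∧ (∀ a b c : ℂ × ℂ, α3 a (circR α c b) = α3 (circR α a b) c
          ∧ α3 (circR α a b) c = α3 (circR α b a) c)
      -- (I3)
      ∧ (∀ a b c : ℂ × ℂ, α2 a (circR α c b) + α3 a (brR β c b)
          = α2 (circR α a b) c + α3 (brR β b a) c)
      -- (I4)
      ∧ (∀ a b c : ℂ × ℂ, α2 a (circR α b c + circR α c b) + α2 (circR α b a) c
          = 2 * α2 (circR α a b) c + 3 * α3 (brR β b a) c)
      -- (I5)
      ∧ (∀ a b c : ℂ × ℂ, α1 a (circR α c b) + α2 a (brR β c b)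
          = α1 (circR α a b) c + α2 (brR β b a) c)
      -- (I6)
      ∧ (∀ a b c : ℂ × ℂ, α1 a (circR α b c + circR α c b) - α1 b (circR α a c + circR α c a)
          = - α1 (circR α b a) c + α1 (circR α a b) c + 2 * α2 (brR β b a) c)
      -- (I7)
      ∧ (∀ a b c : ℂ × ℂ, α0 a (circR α c b) + α1 a (brR β c b) - α0 b (circR α a c + circR α c a)
          = α0 (circR α a b) c + α1 (brR β b a) c)
      -- (I8)
      ∧ (∀ a b c : ℂ × ℂ, α0 a (brR β c b) - α0 b (brR β c a) = α0 (brR β b a) c))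
    -- ... hold if and only if:
    ↔ (∃ A B C : ℂ,
        α3 Lgen Lgen = A ∧ α1 Lgen Lgen = B
          ∧ α1 Lgen Wgen = C ∧ α1 Wgen Lgen = C
          ∧ α0 Lgen Wgen = β / α * C ∧ α0 Wgen Lgen = -(β / α * C)
          ∧ α3 Lgen Wgen = 0 ∧ α3 Wgen Lgen = 0 ∧ α3 Wgen Wgen = 0
          ∧ (∀ u v : ℂ × ℂ, α2 u v = 0)
          ∧ α1 Wgen Wgen = 0
          ∧ α0 Lgen Lgen = 0 ∧ α0 Wgen Wgen = 0) := by
  obtain ⟨hα, hα1, hα2⟩ : α ≠ 0 ∧ (α - 1 ≠ 0 ∨ β ≠ 0) ∧ (α - 2 ≠ 0 ∨ β ≠ 0) := by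
    rcases hcase with ⟨h0, h1, h2⟩ | ⟨rfl, hβ⟩ | ⟨rfl, hβ⟩ <;> norm_num [sub_ne_zero, *]
  constructor
  · intro (h : GDIdentities α β α0 α1 α2 α3)
    have ⟨h0, h1, _, h3, _⟩ := h
    have h3LW := h.α3_Lgen_Wgen_eq_zero hα2
    have h0LW : α0 Lgen Wgen = β / α * α1 Lgen Wgen := by
      rw [div_mul_eq_mul_div, eq_div_iff hα, mul_comm, h.mul_α0_Lgen_Wgen_eq]
    exact ⟨_, _, _, rfl, rfl, rfl, h1 _ _, h0LW, by rw [h0, h0LW], h3LW, by rw [h3, h3LW],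
      h.α3_Wgen_Wgen_eq_zero, h.α2_eq_zero hα1, h.α1_Wgen_Wgen_eq_zero hα1,
      self_eq_neg.1 (h0 _ _), self_eq_neg.1 (h0 _ _)⟩
  · rintro ⟨A, B, C, h3LL, h1LL, h1LW, h1WL, h0LW, h0WL, h3LW, h3WL, h3WW, h2, h1WW, h0LL, h0WW⟩
    refine GDIdentities.of_apply_eq (A := A) (B := B) (C := C) (c := β / α * C)
      (fun a b => ?_) (fun a b => ?_) h2 (fun a b => ?_) (by rw [← mul_assoc, mul_div_cancel₀ _ hα])
    · rw [bilin_apply_eq α0, h0LL, h0LW, h0WL, h0WW]; ring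
    · rw [bilin_apply_eq α1, h1LL, h1LW, h1WL, h1WW]; ring
    · rw [bilin_apply_eq α3, h3LL, h3LW, h3WL, h3WW]; ring
end

section
/- Let V = ⊕_{i∈ℤ} ℂL_i be the Novikov algebra with product L_i∘L_j = −L_{i+j} (trivial Lie bracket). Then bilinear forms α_0, α_1, α_2, α_3 : V×V → ℂ satisfy the identities (N1)–(N5) if and only if α_0 = 0, α_2 = 0, and there exist functions f, g : ℤ → ℂ such that α_3(L_i, L_j) = f(i+j) and α_1(L_i, L_j) = g(i+j) for all i, j ∈ ℤ. -/
/-!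
Here `L_i ∘ L_j = −L_{i+j}`, so the product is commutative and every identity can be tested on
basis vectors. Specialising (N3) to `(L_i, L_0, L_j)` gives `α₂ = 0`; specialising (N5) to
`(L_i, L_j, L_0)` and using skew-symmetry gives `α₀(L_{i+j}, L_0) = 3 α₀(L_i, L_j)`, which is
symmetric in `i, j`, so `α₀ = 0`; and (N2), (N4) at `(L_i, L_j, L_0)` show that `α₃(L_i, L_j)`
and `α₁(L_i, L_j)` only depend on `i + j`. Conversely, a form whose values on `(L_i, L_j)` only
depend on `i + j` is symmetric and satisfies `α(a, c ∘ b) = α(a ∘ b, c)`, as one checks on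
basis vectors.
-/

/-- The Novikov product on `V = ⊕_{i∈ℤ} ℂL_i` (realized as `ℤ →₀ ℂ`) determined by
`L_i ∘ L_j = −L_{i+j}`. -/
noncomputable def circLW (u v : ℤ →₀ ℂ) : ℤ →₀ ℂ :=
  u.sum fun i x => v.sum fun j y => Finsupp.single (i + j) (-(x * y))

/-- The basis vector `L_i`. -/
noncomputable def LV (i : ℤ) : ℤ →₀ ℂ := Finsupp.single i 1

local notation "V" => ℤ →₀ ℂ

section Basis

lemma single_eq_smul_LV (i : ℤ) (x : ℂ) : Finsupp.single i x = x • LV i := by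
  rw [LV, Finsupp.smul_single', mul_one]

@[simp] lemma circLW_zero_left (v : V) : circLW 0 v = 0 := by simp [circLW]

@[simp] lemma circLW_zero_right (u : V) : circLW u 0 = 0 := by simp [circLW]

lemma circLW_single (i j : ℤ) (x y : ℂ) :
    circLW (Finsupp.single i x) (Finsupp.single j y) = Finsupp.single (i + j) (-(x * y)) := by
  unfold circLW
  rw [Finsupp.sum_single_index, Finsupp.sum_single_index] <;> simp

lemma circLW_add_left (u u' v : V) : circLW (u + u') v = circLW u v + circLW u' v := by
  unfold circLW
  rw [Finsupp.sum_add_index']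
  · intro i; simp
  · intro i x x'
    rw [← Finsupp.sum_add]
    congr 1; ext j y
    simp only [add_mul, neg_add, Finsupp.single_add]

lemma circLW_add_right (u v v' : V) : circLW u (v + v') = circLW u v + circLW u v' := by
  unfold circLW
  rw [← Finsupp.sum_add]
  congr 1; ext i x
  rw [Finsupp.sum_add_index']
  · intro j; simp
  · intro j y y'
    simp only [mul_add, neg_add, Finsupp.single_add]

lemma circLW_LV (i j : ℤ) : circLW (LV i) (LV j) = -LV (i + j) := by
  rw [LV, LV, circLW_single, mul_one, LV, Finsupp.single_neg]

lemma circLW_comm (u v : V) : circLW u v = circLW v u := by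
  induction u using Finsupp.induction_linear with
  | zero => simp
  | add u u' hu hu' => rw [circLW_add_left, circLW_add_right, hu, hu']
  | single i x =>
    induction v using Finsupp.induction_linear with
    | zero => simp
    | add v v' hv hv' => rw [circLW_add_left, circLW_add_right, hv, hv']
    | single j y => rw [circLW_single, circLW_single, add_comm j i, mul_comm y x]

end Basis

section Forms

variable {β : V →ₗ[ℂ] V →ₗ[ℂ] ℂ}

lemma apply_single_single (i j : ℤ) (x y : ℂ) :
    β (Finsupp.single i x) (Finsupp.single j y) = x * y * β (LV i) (LV j) := by
  simp only [single_eq_smul_LV, map_smul, LinearMap.smul_apply, smul_eq_mul]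
  ring

lemma bilin_ext_LV {γ : V →ₗ[ℂ] V →ₗ[ℂ] ℂ} (h : ∀ i j, β (LV i) (LV j) = γ (LV i) (LV j)) :
    β = γ :=
  LinearMap.ext_basis Finsupp.basisSingleOne Finsupp.basisSingleOne (by simpa [LV] using h)

lemma bilin_eq_zero_of_LV (h : ∀ i j, β (LV i) (LV j) = 0) (a b : V) : β a b = 0 := by
  simp [bilin_ext_LV (γ := 0) (by simpa using h)]

lemma apply_LV_eq_zero_of_N5 (hskew : ∀ a b, β a b = -β b a)
    (hN5 : ∀ a b c, β (circLW c a) b - β (circLW c b) a = β (circLW a b) c - β (circLW a c) b)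
    (i j : ℤ) : β (LV i) (LV j) = 0 := by
  have hsum : ∀ i j : ℤ, β (LV (i + j)) (LV 0) = 3 * β (LV i) (LV j) := by
    intro i j
    have h := hN5 (LV i) (LV j) (LV 0)
    simp only [circLW_LV, map_neg, LinearMap.neg_apply, zero_add, add_zero] at h
    linear_combination h - hskew (LV i) (LV j)
  have hsum' := hsum j i
  rw [add_comm j i] at hsum'
  linear_combination (hsum' - hsum i j + 3 * hskew (LV i) (LV j)) / 6

lemma apply_LV_eq_zero_of_N3
    (hN3 : ∀ a b c, β a (circLW b c) + β (circLW b a) c = β (circLW a b) c) (i j : ℤ) :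
    β (LV i) (LV j) = 0 := by
  have h := hN3 (LV i) (LV 0) (LV j)
  simp only [circLW_LV, map_neg, LinearMap.neg_apply, zero_add, add_zero] at h
  linear_combination -h

lemma apply_LV_eq_apply_add_of_N4 (hN4 : ∀ a b c, β a (circLW c b) = β (circLW a b) c)
    (i j : ℤ) : β (LV i) (LV j) = β (LV (i + j)) (LV 0) := by
  have h := hN4 (LV i) (LV j) (LV 0)
  simp only [circLW_LV, map_neg, LinearMap.neg_apply, zero_add] at h
  linear_combination -h

variable {f : ℤ → ℂ}

lemma apply_comm_of_LV_eq (hf : ∀ i j, β (LV i) (LV j) = f (i + j)) (a b : V) :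
    β a b = β b a := by
  simpa using LinearMap.congr_fun₂ (bilin_ext_LV (γ := β.flip) (by simp [hf, add_comm])) a b

lemma apply_circLW_of_LV_eq (hf : ∀ i j, β (LV i) (LV j) = f (i + j)) (a b c : V) :
    β a (circLW c b) = β (circLW a b) c := by
  induction a using Finsupp.induction_linear with
  | zero => simp
  | add a a' ha ha' => simp only [map_add, LinearMap.add_apply, circLW_add_left, ha, ha']
  | single i x =>
    induction b using Finsupp.induction_linear with
    | zero => simp
    | add b b' hb hb' => simp only [map_add, LinearMap.add_apply, circLW_add_right, hb, hb']
    | single j y =>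
      induction c using Finsupp.induction_linear with
      | zero => simp
      | add c c' hc hc' => simp only [map_add, circLW_add_left, hc, hc']
      | single k z =>
        rw [circLW_single, circLW_single, apply_single_single, apply_single_single, hf, hf,
          show i + (k + j) = i + j + k by ring]
        ring

end Forms

/-- For the Novikov algebra `V = ⊕_{i∈ℤ} ℂL_i` with
`L_i∘L_j = −L_{i+j}` (trivial Lie bracket): bilinear forms `α_0, α_1, α_2, α_3`
satisfy (N1)–(N5) if and only if `α_0 = 0`, `α_2 = 0`, and there are functions
`f, g : ℤ → ℂ` with `α_3(L_i,L_j) = f(i+j)` and `α_1(L_i,L_j) = g(i+j)`. -/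
theorem stmt_16 (α0 α1 α2 α3 : (ℤ →₀ ℂ) →ₗ[ℂ] (ℤ →₀ ℂ) →ₗ[ℂ] ℂ) :
    -- the identities (N1)–(N5) ...
    ((∀ a b : ℤ →₀ ℂ, α0 a b = - α0 b a)
      ∧ (∀ a b : ℤ →₀ ℂ, α1 a b = α1 b a)
      ∧ (∀ a b : ℤ →₀ ℂ, α2 a b = - α2 b a)
      ∧ (∀ a b : ℤ →₀ ℂ, α3 a b = α3 b a)
      -- (N2)
      ∧ (∀ a b c : ℤ →₀ ℂ, α3 a (circLW c b) = α3 (circLW a b) c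
          ∧ α3 (circLW a b) c = α3 (circLW b a) c)
      -- (N3)
      ∧ (∀ a b c : ℤ →₀ ℂ, α2 a (circLW b c) + α2 (circLW b a) c = α2 (circLW a b) c
          ∧ α2 (circLW a b) c = α2 a (circLW c b))
      -- (N4)
      ∧ (∀ a b c : ℤ →₀ ℂ, α1 a (circLW c b) = α1 (circLW a b) c)
      -- (N5)
      ∧ (∀ a b c : ℤ →₀ ℂ, α0 (circLW c a) b - α0 (circLW c b) a
          = α0 (circLW a b) c - α0 (circLW a c) b))
    -- ... hold if and only if:
    ↔ ((∀ a b : ℤ →₀ ℂ, α0 a b = 0)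
        ∧ (∀ a b : ℤ →₀ ℂ, α2 a b = 0)
        ∧ ∃ f g : ℤ → ℂ, ∀ i j : ℤ,
            α3 (LV i) (LV j) = f (i + j) ∧ α1 (LV i) (LV j) = g (i + j)) := by
  constructor
  · rintro ⟨h0, -, -, -, hN2, hN3, hN4, hN5⟩
    refine ⟨bilin_eq_zero_of_LV (apply_LV_eq_zero_of_N5 h0 hN5),
      bilin_eq_zero_of_LV (apply_LV_eq_zero_of_N3 fun a b c => (hN3 a b c).1),
      fun n => α3 (LV n) (LV 0), fun n => α1 (LV n) (LV 0), fun i j =>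
        ⟨apply_LV_eq_apply_add_of_N4 (fun a b c => (hN2 a b c).1) i j,
          apply_LV_eq_apply_add_of_N4 hN4 i j⟩⟩
  · rintro ⟨h0, h2, f, g, hfg⟩
    have hf : ∀ i j, α3 (LV i) (LV j) = f (i + j) := fun i j => (hfg i j).1
    have hg : ∀ i j, α1 (LV i) (LV j) = g (i + j) := fun i j => (hfg i j).2
    refine ⟨by simp [h0], apply_comm_of_LV_eq hg, by simp [h2], apply_comm_of_LV_eq hf,
      fun a b c => ⟨apply_circLW_of_LV_eq hf a b c, by rw [circLW_comm]⟩, by simp [h2],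
      apply_circLW_of_LV_eq hg, by simp [h0]⟩
end
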